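/- arXiv:2003.08217 — 7 statements merged into one kernel-verified Lean document; each statement's English description precedes it below -/
import Mathlib

section
/- Fix a universe of small groupoids. Suppose c assigns to every essentially finite groupoid 𝒢 a rational number c(𝒢) such that: (G1) c(𝟙) = 1, where 𝟙 is the groupoid with exactly one object and only its identity morphism; (G2) c(𝒢) = c(𝒢') whenever 𝒢 and 𝒢' are equivalent as categories; (G3) c(𝒢 ⊔ 𝒢') = c(𝒢) + c(𝒢'), where 𝒢 ⊔ 𝒢' is the disjoint union groupoid; (G4) c(𝒢) = n · c(𝒢') whenever n ∈ ℕ and there exists an n-fold covering 𝒢 → 𝒢'. Then c(𝒢) = ∑_{[x] ∈ π₀(𝒢)} 1/|Aut(x)| for every essentially finite groupoid 𝒢. -/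
open CategoryTheory

/-- A groupoid is essentially finite if it has finitely many isomorphism classes of objects
and all automorphism groups of its objects are finite. -/
def EssentiallyFinite (G : Type) [Groupoid.{0, 0} G] : Prop :=
  Finite (Quotient (isIsomorphicSetoid G)) ∧ ∀ x : G, Finite (x ⟶ x)

/-- The groupoid cardinality `|𝒢| = ∑_{[x] ∈ π₀(𝒢)} 1 / |Aut x|` of a groupoid. -/
noncomputable def groupoidCard (G : Type) [Groupoid.{0, 0} G] : ℚ :=
  ∑ᶠ q : Quotient (isIsomorphicSetoid G),
    1 / (Nat.card (Quotient.out q ⟶ Quotient.out q) : ℚ)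

/-- A functor between groupoids is a covering if for every object `x` of the source and
every morphism `f` of the target with source `F.obj x` there is exactly one morphism `u`
of the source with source `x` such that `F` maps `u` to `f`. -/
def IsCovering {G G' : Type} [Groupoid.{0, 0} G] [Groupoid.{0, 0} G'] (F : G ⥤ G') : Prop :=
  ∀ x : G, Function.Bijective
    (fun p : Σ y : G, x ⟶ y => (⟨F.obj p.1, F.map p.2⟩ : Σ y' : G', F.obj x ⟶ y'))

/-- An `n`-fold covering is a covering such that every fibre has exactly `n` elements. -/
def IsNFoldCovering {G G' : Type} [Groupoid.{0, 0} G] [Groupoid.{0, 0} G'] (n : ℕ)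
    (F : G ⥤ G') : Prop :=
  IsCovering F ∧
    ∀ y : G', Finite {x : G // F.obj x = y} ∧ Nat.card {x : G // F.obj x = y} = n

/-- The disjoint union of two groupoids is a groupoid. -/
instance sumGroupoid (G G' : Type) [Groupoid.{0, 0} G] [Groupoid.{0, 0} G'] :
    Groupoid.{0, 0} (G ⊕ G') where
  inv {X Y} f :=
    match X, Y, f with
    | Sum.inl _, Sum.inl _, f => ULift.up (Groupoid.inv f.down)
    | Sum.inl _, Sum.inr _, f => nomatch f
    | Sum.inr _, Sum.inl _, f => nomatch f
    | Sum.inr _, Sum.inr _, f => ULift.up (Groupoid.inv f.down)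
  inv_comp {X Y} f :=
    match X, Y, f with
    | Sum.inl _, Sum.inl _, f => congrArg ULift.up (Groupoid.inv_comp f.down)
    | Sum.inl _, Sum.inr _, f => nomatch f
    | Sum.inr _, Sum.inl _, f => nomatch f
    | Sum.inr _, Sum.inr _, f => congrArg ULift.up (Groupoid.inv_comp f.down)
  comp_inv {X Y} f :=
    match X, Y, f with
    | Sum.inl _, Sum.inl _, f => congrArg ULift.up (Groupoid.comp_inv f.down)
    | Sum.inl _, Sum.inr _, f => nomatch f
    | Sum.inr _, Sum.inl _, f => nomatch f
    | Sum.inr _, Sum.inr _, f => congrArg ULift.up (Groupoid.comp_inv f.down)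

/-!
An essentially finite groupoid is equivalent to the disjoint union of the full subgroupoid on one
isomorphism class and the full subgroupoid on all the others, which has fewer isomorphism
classes. By (G2) and (G3), and induction on the number of isomorphism classes, it therefore
suffices to compute `c` on the empty groupoid, where `c(∅ ⊔ ∅) = c(∅)` forces `c(∅) = 0`, and on
a connected groupoid. A connected groupoid is equivalent to the one-object groupoid of the
automorphism group `A` of any of its objects. The indiscrete groupoid `Codiscrete A` is
equivalent to `𝟙` and covers `SingleObj A` `|A|`-fold via `(a → b) ↦ b a⁻¹`, so (G1) and (G4)
give `|A| · c(SingleObj A) = 1`. The groupoid cardinality satisfies the same equations.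
-/

open CategoryTheory

local notation:max "π₀ " C:max => Quotient (isIsomorphicSetoid C)

section IsoClasses

variable {C D : Type*} [Category C] [Category D]

def isoClassesMap (F : C ⥤ D) : π₀ C → π₀ D :=
  Quotient.map F.obj fun _ _ ⟨e⟩ => ⟨F.mapIso e⟩

lemma isoClassesMap_apply (F : C ⥤ D) (q : π₀ C) : isoClassesMap F q = ⟦F.obj q.out⟧ := by
  conv_lhs => rw [← Quotient.out_eq q]
  rfl

lemma isoClassesMap_injective {F : C ⥤ D} (hF : F.FullyFaithful) :
    Function.Injective (isoClassesMap F) :=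
  Quotient.ind₂ fun _ _ h => Quotient.sound ((Quotient.exact h).map hF.preimageIso)

lemma isoClassesMap_surjective (F : C ⥤ D) [F.EssSurj] :
    Function.Surjective (isoClassesMap F) :=
  Quotient.ind fun y => ⟨⟦F.objPreimage y⟧, Quotient.sound ⟨F.objObjPreimageIso y⟩⟩

noncomputable def isoClassesEquivOfEquivalence (e : C ≌ D) : π₀ C ≃ π₀ D :=
  Equiv.ofBijective (isoClassesMap e.functor)
    ⟨isoClassesMap_injective e.fullyFaithfulFunctor, isoClassesMap_surjective e.functor⟩

def CategoryTheory.Sum.fullyFaithfulInl : (Sum.inl_ C D).FullyFaithful where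
  preimage f := f.down

def CategoryTheory.Sum.fullyFaithfulInr : (Sum.inr_ C D).FullyFaithful where
  preimage f := f.down

def isoClassesSumEquiv : π₀ (C ⊕ D) ≃ π₀ C ⊕ π₀ D where
  toFun := Quotient.lift (Sum.elim (fun x => .inl ⟦x⟧) (fun y => .inr ⟦y⟧)) <| by
    rintro (x | y) (x' | y') ⟨e⟩
    · exact congrArg Sum.inl (Quotient.sound ⟨Sum.fullyFaithfulInl.preimageIso e⟩)
    · exact (hom_inl_inr_false _ _ e.hom).elim
    · exact (hom_inr_inl_false _ _ e.hom).elim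
    · exact congrArg Sum.inr (Quotient.sound ⟨Sum.fullyFaithfulInr.preimageIso e⟩)
  invFun := Sum.elim (isoClassesMap (Sum.inl_ C D)) (isoClassesMap (Sum.inr_ C D))
  left_inv := Quotient.ind <| by rintro (x | y) <;> rfl
  right_inv := by rintro (q | q) <;> induction q using Quotient.ind <;> rfl

def CategoryTheory.ObjectProperty.ofIsoClass (q : π₀ C) : ObjectProperty C :=
  fun x => ⟦x⟧ = q

instance (q : π₀ C) : (ObjectProperty.ofIsoClass q).IsClosedUnderIsomorphisms where
  of_iso {x y} e (h : ⟦x⟧ = q) :=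
    (Quotient.sound ⟨e.symm⟩ : (⟦y⟧ : π₀ C) = ⟦x⟧).trans h

lemma nonempty_iso_of_ofIsoClass {q : π₀ C}
    (x : (ObjectProperty.ofIsoClass q).FullSubcategory) :
    Nonempty (x ≅ ⟨q.out, q.out_eq⟩) :=
  (Quotient.exact (x.property.trans q.out_eq.symm)).map
    (ObjectProperty.fullyFaithfulι _).preimageIso

lemma card_isoClasses_compl_ofIsoClass_lt [Finite (π₀ C)] (q : π₀ C) :
    Nat.card (π₀ (ObjectProperty.ofIsoClass q)ᶜ.FullSubcategory) < Nat.card (π₀ C) := by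
  let f : π₀ (ObjectProperty.ofIsoClass q)ᶜ.FullSubcategory → {p : π₀ C // p ≠ q} :=
    fun r => ⟨isoClassesMap (ObjectProperty.ι _) r, by
      induction r using Quotient.ind with | _ x => exact x.property⟩
  have hf : Function.Injective f := fun r r' h =>
    isoClassesMap_injective (ObjectProperty.fullyFaithfulι _) (congrArg Subtype.val h)
  exact (Nat.card_le_card_of_injective f hf).trans_lt
    (Finite.card_subtype_lt (x := q) (by simp))

end IsoClasses

section GroupoidCard

variable {G G' : Type} [Groupoid.{0, 0} G] [Groupoid.{0, 0} G']

lemma groupoidCard_eq_finsum {ι : Type*} (e : ι ≃ π₀ G) (rep : ι → G)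
    (hrep : ∀ i, ⟦rep i⟧ = e i) :
    groupoidCard G = ∑ᶠ i, 1 / (Nat.card (rep i ⟶ rep i) : ℚ) := by
  rw [groupoidCard, ← finsum_comp_equiv e]
  refine finsum_congr fun i => ?_
  obtain ⟨f⟩ : Nonempty ((e i).out ≅ rep i) := by
    rw [← hrep i]
    exact Quotient.mk_out (s := isIsomorphicSetoid G) (rep i)
  exact congrArg (fun n : ℕ => 1 / (n : ℚ)) (Nat.card_congr f.conj.toEquiv)

lemma groupoidCard_congr (e : G ≌ G') : groupoidCard G = groupoidCard G' := by
  rw [groupoidCard_eq_finsum (isoClassesEquivOfEquivalence e) (fun q => e.functor.obj q.out)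
    fun q => (isoClassesMap_apply e.functor q).symm]
  refine finsum_congr fun q => ?_
  rw [Nat.card_congr (e.fullyFaithfulFunctor.homEquiv (X := q.out) (Y := q.out))]

lemma groupoidCard_sum [Finite (π₀ G)] [Finite (π₀ G')] :
    groupoidCard (G ⊕ G') = groupoidCard G + groupoidCard G' := by
  have := Fintype.ofFinite (π₀ G)
  have := Fintype.ofFinite (π₀ G')
  rw [groupoidCard_eq_finsum isoClassesSumEquiv.symm (Sum.elim (.inl ·.out) (.inr ·.out)) <| by
      rintro (q | q) <;> exact Eq.symm (isoClassesMap_apply _ q),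
    finsum_eq_sum_of_fintype, Fintype.sum_sum_type, groupoidCard, groupoidCard,
    finsum_eq_sum_of_fintype, finsum_eq_sum_of_fintype]
  congr 1 <;> refine Finset.sum_congr rfl fun q _ => ?_
  · exact congrArg (fun n : ℕ => 1 / (n : ℚ))
      (Nat.card_congr (Sum.fullyFaithfulInl (C := G) (D := G')).homEquiv.symm)
  · exact congrArg (fun n : ℕ => 1 / (n : ℚ))
      (Nat.card_congr (Sum.fullyFaithfulInr (C := G) (D := G')).homEquiv.symm)

lemma groupoidCard_of_isEmpty [IsEmpty G] : groupoidCard G = 0 :=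
  finsum_of_isEmpty _

lemma groupoidCard_of_nonempty_iso (x₀ : G) (hx₀ : ∀ x : G, Nonempty (x ≅ x₀)) :
    groupoidCard G = 1 / (Nat.card (x₀ ⟶ x₀) : ℚ) := by
  have : Unique (π₀ G) := ⟨⟨⟦x₀⟧⟩, Quotient.ind fun x => Quotient.sound (hx₀ x)⟩
  rw [groupoidCard_eq_finsum (Equiv.ofUnique Unit (π₀ G)) (fun _ => x₀)
    fun _ => Subsingleton.elim _ _, finsum_unique]

end GroupoidCard

section EssentiallyFinite

variable {G G' : Type} [Groupoid.{0, 0} G] [Groupoid.{0, 0} G']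

lemma EssentiallyFinite.of_fullyFaithful {F : G ⥤ G'} (hF : F.FullyFaithful)
    (h : EssentiallyFinite G') : EssentiallyFinite G :=
  have := h.1
  ⟨.of_injective _ (isoClassesMap_injective hF),
    fun x => have := h.2 (F.obj x); .of_equiv _ hF.homEquiv.symm⟩

lemma EssentiallyFinite.sum (h : EssentiallyFinite G) (h' : EssentiallyFinite G') :
    EssentiallyFinite (G ⊕ G') :=
  have := h.1
  have := h'.1
  ⟨.of_equiv _ isoClassesSumEquiv.symm, by
    rintro (x | y)
    · have := h.2 x
      exact .of_equiv _ Sum.fullyFaithfulInl.homEquiv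
    · have := h'.2 y
      exact .of_equiv _ Sum.fullyFaithfulInr.homEquiv⟩

lemma EssentiallyFinite.of_isEmpty [IsEmpty G] : EssentiallyFinite G :=
  ⟨inferInstance, isEmptyElim⟩

lemma EssentiallyFinite.singleObj (A : Type) [Group A] [Finite A] :
    EssentiallyFinite (SingleObj A) :=
  ⟨inferInstance, fun _ => inferInstanceAs (Finite A)⟩

end EssentiallyFinite

section Decomposition

variable {G : Type} [Groupoid.{0, 0} G]

instance (P : ObjectProperty G) : Groupoid.{0, 0} P.FullSubcategory :=
  Groupoid.ofFullyFaithfulToGroupoid P.ι P.fullyFaithfulι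

variable (P : ObjectProperty G) [P.IsClosedUnderIsomorphisms]

instance : (P.ι.sum' Pᶜ.ι).Faithful where
  map_injective {X Y} f g h := by
    match X, Y, f, g with
    | .inl _, .inl _, ⟨_⟩, ⟨_⟩ => exact congrArg ULift.up (InducedCategory.hom_ext h)
    | .inr _, .inr _, ⟨_⟩, ⟨_⟩ => exact congrArg ULift.up (InducedCategory.hom_ext h)

instance : (P.ι.sum' Pᶜ.ι).Full where
  map_surjective {X Y} f := by
    match X, Y with
    | .inl _, .inl _ => exact ⟨⟨ObjectProperty.homMk f⟩, rfl⟩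
    | .inr _, .inr _ => exact ⟨⟨ObjectProperty.homMk f⟩, rfl⟩
    | .inl x, .inr y =>
      exact (y.property (P.prop_of_iso ((Groupoid.isoEquivHom _ _).symm f) x.property)).elim
    | .inr x, .inl y =>
      exact (x.property (P.prop_of_iso ((Groupoid.isoEquivHom _ _).symm f).symm y.property)).elim

instance : (P.ι.sum' Pᶜ.ι).EssSurj where
  mem_essImage x := by
    by_cases hx : P x
    · exact ⟨.inl ⟨x, hx⟩, ⟨Iso.refl x⟩⟩
    · exact ⟨.inr ⟨x, hx⟩, ⟨Iso.refl x⟩⟩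

instance : (P.ι.sum' Pᶜ.ι).IsEquivalence where

noncomputable def CategoryTheory.ObjectProperty.sumComplEquivalence :
    P.FullSubcategory ⊕ Pᶜ.FullSubcategory ≌ G :=
  (P.ι.sum' Pᶜ.ι).asEquivalence

end Decomposition

theorem EssentiallyFinite.induction {motive : ∀ (G : Type) [Groupoid.{0, 0} G], Prop}
    (equivalence : ∀ (G G' : Type) [Groupoid.{0, 0} G] [Groupoid.{0, 0} G'],
      EssentiallyFinite G → EssentiallyFinite G' → (G ≌ G') → motive G → motive G')
    (isEmpty : ∀ (G : Type) [Groupoid.{0, 0} G] [IsEmpty G], motive G)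
    (connected : ∀ (G : Type) [Groupoid.{0, 0} G], EssentiallyFinite G →
      ∀ x₀ : G, (∀ x : G, Nonempty (x ≅ x₀)) → motive G)
    (sum : ∀ (G G' : Type) [Groupoid.{0, 0} G] [Groupoid.{0, 0} G'],
      EssentiallyFinite G → EssentiallyFinite G' → motive G → motive G' → motive (G ⊕ G'))
    (G : Type) [Groupoid.{0, 0} G] (hG : EssentiallyFinite G) : motive G := by
  induction h : Nat.card (π₀ G) using Nat.strong_induction_on generalizing G with
  | _ n ih =>
    have := hG.1
    obtain _ | ⟨⟨q⟩⟩ := isEmpty_or_nonempty (π₀ G)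
    · have : IsEmpty G := ⟨fun x => IsEmpty.false (⟦x⟧ : π₀ G)⟩
      exact isEmpty G
    let P : ObjectProperty G := .ofIsoClass q
    have hP := hG.of_fullyFaithful P.fullyFaithfulι
    have hPc := hG.of_fullyFaithful Pᶜ.fullyFaithfulι
    refine equivalence _ _ (hP.sum hPc) hG (ObjectProperty.sumComplEquivalence P)
      (sum _ _ hP hPc ?_ ?_)
    · exact connected _ hP _ nonempty_iso_of_ofIsoClass
    · exact ih _ (h ▸ card_isoClasses_compl_ofIsoClass_lt q) _ hPc rfl

section Codiscrete

variable (A : Type)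

instance : Groupoid.{0, 0} (Codiscrete A) :=
  Groupoid.ofHomUnique fun {X Y} => Codiscrete.uniqueHom X Y

lemma EssentiallyFinite.codiscrete : EssentiallyFinite (Codiscrete A) :=
  have : Subsingleton (π₀ (Codiscrete A)) :=
    ⟨Quotient.ind₂ fun x y => Quotient.sound ⟨Codiscrete.iso x y⟩⟩
  ⟨inferInstance, fun _ => inferInstanceAs (Finite Unit)⟩

noncomputable def CategoryTheory.Codiscrete.equivalenceSingleObjPUnit (a : A) :
    SingleObj PUnit ≌ Codiscrete A :=
  have : (Codiscrete.functor fun _ : SingleObj PUnit => a).Full := ⟨fun _ => ⟨⟨⟩, rfl⟩⟩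
  have : (Codiscrete.functor fun _ : SingleObj PUnit => a).Faithful :=
    ⟨fun _ => Subsingleton.elim (α := PUnit) _ _⟩
  have : (Codiscrete.functor fun _ : SingleObj PUnit => a).EssSurj :=
    ⟨fun y => ⟨SingleObj.star _, ⟨Codiscrete.iso _ _⟩⟩⟩
  have : (Codiscrete.functor fun _ : SingleObj PUnit => a).IsEquivalence := {}
  (Codiscrete.functor fun _ : SingleObj PUnit => a).asEquivalence

lemma isNFoldCovering_differenceFunctor [Group A] [Finite A] :
    IsNFoldCovering (Nat.card A)
      (SingleObj.differenceFunctor (Codiscrete.as : Codiscrete A → A)) := by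
  refine ⟨fun x => ⟨?_, ?_⟩, fun _ => ?_⟩
  · rintro ⟨y, ⟨⟩⟩ ⟨y', ⟨⟩⟩ h
    obtain rfl : y = y' := Codiscrete.ext (mul_right_cancel (Sigma.mk.inj h).2.eq)
    rfl
  · rintro ⟨⟨⟩, g⟩
    exact ⟨⟨⟨g * x.as⟩, ⟨⟩⟩, by simp⟩
  · let e : {x : Codiscrete A // (SingleObj.differenceFunctor Codiscrete.as).obj x = ()} ≃ A :=
      (Equiv.subtypeUnivEquiv fun _ => rfl).trans codiscreteEquiv
    exact ⟨.of_equiv _ e.symm, Nat.card_congr e⟩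

end Codiscrete

section Connected

variable {G : Type} [Groupoid.{0, 0} G]

noncomputable def equivalenceSingleObjEnd (x₀ : G) (hx₀ : ∀ x : G, Nonempty (x ≅ x₀)) :
    SingleObj (End x₀) ≌ G :=
  have : (SingleObj.functor (MonoidHom.id (End x₀))).Full := ⟨fun f => ⟨f, rfl⟩⟩
  have : (SingleObj.functor (MonoidHom.id (End x₀))).Faithful := ⟨fun h => h⟩
  have : (SingleObj.functor (MonoidHom.id (End x₀))).EssSurj :=
    ⟨fun x => ⟨SingleObj.star _, (hx₀ x).map Iso.symm⟩⟩
  have : (SingleObj.functor (MonoidHom.id (End x₀))).IsEquivalence := {}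
  (SingleObj.functor (MonoidHom.id (End x₀))).asEquivalence

end Connected

section Axioms

variable (c : ∀ (G : Type) [Groupoid.{0, 0} G], ℚ)

def IsEquivalenceInvariant : Prop :=
  ∀ (G G' : Type) [Groupoid.{0, 0} G] [Groupoid.{0, 0} G'],
    EssentiallyFinite G → EssentiallyFinite G' → (G ≌ G') → c G = c G'

def IsSumAdditive : Prop :=
  ∀ (G G' : Type) [Groupoid.{0, 0} G] [Groupoid.{0, 0} G'],
    EssentiallyFinite G → EssentiallyFinite G' → c (G ⊕ G') = c G + c G'

def IsCoveringMultiplicative : Prop :=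
  ∀ (n : ℕ) (G G' : Type) [Groupoid.{0, 0} G] [Groupoid.{0, 0} G'] (F : G ⥤ G'),
    EssentiallyFinite G → EssentiallyFinite G' → IsNFoldCovering n F → c G = n * c G'

variable {c}

lemma eq_zero_of_isEmpty (h₂ : IsEquivalenceInvariant c) (h₃ : IsSumAdditive c)
    (G : Type) [Groupoid.{0, 0} G] [IsEmpty G] : c G = 0 := by
  have hG : EssentiallyFinite G := .of_isEmpty
  have h := h₃ G G hG hG
  rw [h₂ _ _ (hG.sum hG) hG (equivalenceOfIsEmpty _ _)] at h
  linarith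

lemma eq_inv_card_of_singleObj (h₁ : c (SingleObj PUnit) = 1) (h₂ : IsEquivalenceInvariant c)
    (h₄ : IsCoveringMultiplicative c) (A : Type) [Group A] [Finite A] :
    c (SingleObj A) = 1 / (Nat.card A : ℚ) := by
  have hA := EssentiallyFinite.codiscrete A
  have h := h₄ _ _ _ _ hA (.singleObj A) (isNFoldCovering_differenceFunctor A)
  rw [← h₂ _ _ (.singleObj PUnit) hA (Codiscrete.equivalenceSingleObjPUnit A 1), h₁] at h
  exact eq_one_div_of_mul_eq_one_right h.symm

lemma eq_inv_card_end_of_nonempty_iso (h₁ : c (SingleObj PUnit) = 1)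
    (h₂ : IsEquivalenceInvariant c) (h₄ : IsCoveringMultiplicative c)
    {G : Type} [Groupoid.{0, 0} G] (hG : EssentiallyFinite G) (x₀ : G)
    (hx₀ : ∀ x : G, Nonempty (x ≅ x₀)) : c G = 1 / (Nat.card (x₀ ⟶ x₀) : ℚ) := by
  have : Finite (End x₀) := hG.2 x₀
  rw [← h₂ _ _ (.singleObj (End x₀)) hG (equivalenceSingleObjEnd x₀ hx₀),
    eq_inv_card_of_singleObj h₁ h₂ h₄]
  rfl

end Axioms

/-- Any assignment of rational numbers to essentially finite groupoids satisfying
(G1) normalization on the one-object one-morphism groupoid, (G2) invariance under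
equivalence, (G3) additivity under disjoint union and (G4) multiplicativity under
`n`-fold coverings is given by the groupoid cardinality `∑_{[x]} 1/|Aut x|`. -/
theorem groupoidCard_unique
    (c : ∀ (G : Type) [Groupoid.{0, 0} G], ℚ)
    (hG1 : c (SingleObj PUnit) = 1)
    (hG2 : ∀ (G G' : Type) [Groupoid.{0, 0} G] [Groupoid.{0, 0} G'],
      EssentiallyFinite G → EssentiallyFinite G' → (G ≌ G') → c G = c G')
    (hG3 : ∀ (G G' : Type) [Groupoid.{0, 0} G] [Groupoid.{0, 0} G'],
      EssentiallyFinite G → EssentiallyFinite G' → c (G ⊕ G') = c G + c G')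
    (hG4 : ∀ (n : ℕ) (G G' : Type) [Groupoid.{0, 0} G] [Groupoid.{0, 0} G'] (F : G ⥤ G'),
      EssentiallyFinite G → EssentiallyFinite G' → IsNFoldCovering n F → c G = n * c G')
    (G : Type) [Groupoid.{0, 0} G] (hG : EssentiallyFinite G) :
    c G = groupoidCard G := by
  refine EssentiallyFinite.induction (motive := fun G _ => c G = groupoidCard G) ?_ ?_ ?_ ?_ G hG
  · intro G G' _ _ hG hG' e h
    rw [← hG2 G G' hG hG' e, h, groupoidCard_congr e]
  · intro G _ _
    rw [eq_zero_of_isEmpty hG2 hG3, groupoidCard_of_isEmpty]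
  · intro G _ hG x₀ hx₀
    rw [eq_inv_card_end_of_nonempty_iso hG1 hG2 hG4 hG x₀ hx₀,
      groupoidCard_of_nonempty_iso x₀ hx₀]
  · intro G G' _ _ hG hG' h h'
    have := hG.1
    have := hG'.1
    rw [hG3 G G' hG hG', groupoidCard_sum, h, h']
end

section
/- If n ∈ ℕ and F: 𝒢 → 𝒢' is an n-fold covering between essentially finite groupoids, then |𝒢| = n · |𝒢'|. -/
open CategoryTheory

namespace GroupoidCardAux

open CategoryTheory

variable {G G' : Type} [Groupoid.{0,0} G] [Groupoid.{0,0} G']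

lemma key (F : G ⥤ G') (hc : IsCovering F) (x1 : G) :
    Nat.card (F.obj x1 ⟶ F.obj x1) =
      Nat.card {x : G // F.obj x = F.obj x1 ∧ Nonempty (x1 ≅ x)} * Nat.card (x1 ⟶ x1) := by
  rw [← Nat.card_prod]
  set S := {x : G // F.obj x = F.obj x1 ∧ Nonempty (x1 ≅ x)}
  have s : ∀ x : S, x1 ≅ x.1 := fun x => x.2.2.some
  set B : S × (x1 ⟶ x1) → (F.obj x1 ⟶ F.obj x1) :=
    fun p => F.map (p.2 ≫ (s p.1).hom) ≫ eqToHom p.1.2.1 with hB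
  refine Nat.card_congr (Equiv.ofBijective B ⟨?_, ?_⟩).symm
  · rintro ⟨x, a⟩ ⟨z, b⟩ h
    simp only [hB] at h
    have hsig : (⟨x.1, a ≫ (s x).hom⟩ : Σ y : G, x1 ⟶ y) = ⟨z.1, b ≫ (s z).hom⟩ := by
      apply (hc x1).1
      show (⟨F.obj x.1, F.map (a ≫ (s x).hom)⟩ : Σ y' : G', F.obj x1 ⟶ y')
          = ⟨F.obj z.1, F.map (b ≫ (s z).hom)⟩
      refine Sigma.ext (x.2.1.trans z.2.1.symm) ?_
      have hh : HEq (F.map (a ≫ (s x).hom) ≫ eqToHom x.2.1)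
          (F.map (b ≫ (s z).hom) ≫ eqToHom z.2.1) := heq_of_eq h
      exact (comp_eqToHom_heq _ _).symm.trans (hh.trans (comp_eqToHom_heq _ _))
    have hxz : x = z := Subtype.ext (congrArg Sigma.fst hsig)
    subst hxz
    have h2 : a ≫ (s x).hom = b ≫ (s x).hom := eq_of_heq (Sigma.mk.inj_iff.mp hsig).2
    have : a = b := by
      have := congrArg (fun u => u ≫ (s x).inv) h2
      simpa using this
    simp [this]
  · intro g
    obtain ⟨⟨z, u⟩, hp⟩ := (hc x1).2 ⟨F.obj x1, g⟩
    injection hp with h1 h2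
    set xS : S := ⟨z, h1, ⟨(Groupoid.isoEquivHom x1 z).symm u⟩⟩ with hxS
    refine ⟨⟨xS, u ≫ (s xS).inv⟩, ?_⟩
    simp only [hB, Category.assoc, Iso.inv_hom_id, Category.comp_id, F.map_comp]
    have h3 : F.map u = eqToHom rfl ≫ g ≫ eqToHom h1.symm :=
      (conj_eqToHom_iff_heq (F.map u) g rfl h1).mpr h2
    simp [h3]

lemma key' (F : G ⥤ G') (hc : IsCovering F) {y' : G'} (x1 : G) (hx1 : F.obj x1 = y') :
    Nat.card (y' ⟶ y') =
      Nat.card {x : G // F.obj x = y' ∧ Nonempty (x1 ≅ x)} * Nat.card (x1 ⟶ x1) := by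
  subst hx1; exact key F hc x1

lemma exists_lift_fiber (F : G ⥤ G') (hc : IsCovering F) {y' : G'} (x0 : G)
    (i : F.obj x0 ≅ y') : ∃ z : G, F.obj z = y' ∧ Nonempty (x0 ≅ z) := by
  obtain ⟨⟨z, u⟩, hp⟩ := (hc x0).2 ⟨y', i.hom⟩
  injection hp with h1 _
  exact ⟨z, h1, ⟨(Groupoid.isoEquivHom x0 z).symm u⟩⟩

theorem main {G G' : Type}
    [Groupoid.{0, 0} G] [Groupoid.{0, 0} G'] (hG : Finite (Quotient (isIsomorphicSetoid G)) ∧ ∀ x : G, Finite (x ⟶ x))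
    (hG' : Finite (Quotient (isIsomorphicSetoid G')) ∧ ∀ x : G', Finite (x ⟶ x)) (n : ℕ) (F : G ⥤ G')
    (hc : IsCovering F)
    (hfib : ∀ y : G', Finite {x : G // F.obj x = y} ∧ Nat.card {x : G // F.obj x = y} = n) :
    (∑ᶠ q : Quotient (isIsomorphicSetoid G),
      1 / (Nat.card (Quotient.out q ⟶ Quotient.out q) : ℚ)) =
    n * ∑ᶠ q : Quotient (isIsomorphicSetoid G'),
      1 / (Nat.card (Quotient.out q ⟶ Quotient.out q) : ℚ) := by
  classical
  haveI := hG.1; haveI := hG'.1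
  letI : Fintype (Quotient (isIsomorphicSetoid G)) := Fintype.ofFinite _
  letI : Fintype (Quotient (isIsomorphicSetoid G')) := Fintype.ofFinite _
  set Q := Quotient (isIsomorphicSetoid G)
  set Q' := Quotient (isIsomorphicSetoid G')
  set φ : Q → Q' := Quotient.lift (fun x => Quotient.mk (isIsomorphicSetoid G') (F.obj x))
    (fun a b h => Quotient.sound ⟨F.mapIso h.some⟩) with hφ
  rw [finsum_eq_sum_of_fintype, finsum_eq_sum_of_fintype, Finset.mul_sum]
  rw [← Finset.sum_fiberwise Finset.univ φ
      (fun q => 1 / (Nat.card (Quotient.out q ⟶ Quotient.out q) : ℚ))]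
  refine Finset.sum_congr rfl fun q' _ => ?_
  -- fix a fibre over q'
  obtain ⟨hFibFin, hFibCard⟩ := hfib (Quotient.out q')
  haveI := hFibFin
  haveI : Finite (Quotient.out q' ⟶ Quotient.out q') := hG'.2 _
  have hAy : 0 < Nat.card (Quotient.out q' ⟶ Quotient.out q') :=
    Nat.card_pos (α := Quotient.out q' ⟶ Quotient.out q')
  -- restrict to subtype
  letI : Fintype {q : Q // φ q = q'} := Subtype.fintype _
  rw [Finset.sum_subtype (p := fun q => φ q = q') (F := this)
    (Finset.univ.filter (fun q => φ q = q')) (by simp)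
    (fun q => 1 / (Nat.card (Quotient.out q ⟶ Quotient.out q) : ℚ))]
  -- choose a fibre representative in each isomorphism class over q'
  have hex : ∀ q : {q : Q // φ q = q'}, ∃ z : G,
      F.obj z = Quotient.out q' ∧ Nonempty (Quotient.out q.1 ≅ z) := by
    intro q
    have h1 : Quotient.mk (isIsomorphicSetoid G') (F.obj (Quotient.out q.1)) = q' := by
      have h0 : φ (Quotient.mk (isIsomorphicSetoid G) (Quotient.out q.1)) = q' := by
        rw [Quotient.out_eq]; exact q.2
      exact h0
    have h2 : Nonempty (F.obj (Quotient.out q.1) ≅ Quotient.out q') :=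
      Quotient.exact (h1.trans (Quotient.out_eq q').symm)
    exact exists_lift_fiber F hc _ h2.some
  choose x1 hx1 hiso using hex
  set m : {q : Q // φ q = q'} → ℕ := fun q =>
    Nat.card {x : G // F.obj x = Quotient.out q' ∧ Nonempty (x1 q ≅ x)} with hm
  have hkey : ∀ q, Nat.card (Quotient.out q' ⟶ Quotient.out q')
      = m q * Nat.card (x1 q ⟶ x1 q) := fun q => key' F hc _ (hx1 q)
  have hconj : ∀ q : {q : Q // φ q = q'},
      Nat.card (Quotient.out q.1 ⟶ Quotient.out q.1) = Nat.card (x1 q ⟶ x1 q) :=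
    fun q => Nat.card_congr ((hiso q).some.homCongr (hiso q).some)
  -- fibre decomposition
  set t : {x : G // F.obj x = Quotient.out q'} → {q : Q // φ q = q'} := fun x =>
    ⟨Quotient.mk (isIsomorphicSetoid G) x.1, by
      rw [hφ]
      show Quotient.mk (isIsomorphicSetoid G') (F.obj x.1) = q'
      rw [x.2, Quotient.out_eq]⟩ with ht
  have hiff : ∀ (q : {q : Q // φ q = q'}) (x : {x : G // F.obj x = Quotient.out q'}),
      t x = q ↔ Nonempty (x1 q ≅ x.1) := by
    intro q x
    rw [Subtype.ext_iff]
    show Quotient.mk (isIsomorphicSetoid G) x.1 = q.1 ↔ _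
    constructor
    · intro h
      have h2 : Nonempty (x.1 ≅ Quotient.out q.1) :=
        Quotient.exact (h.trans (Quotient.out_eq q.1).symm)
      exact ⟨(hiso q).some.symm.trans h2.some.symm⟩
    · intro h
      rw [← Quotient.out_eq q.1]
      exact Quotient.sound ⟨h.some.symm.trans ((hiso q).some.symm)⟩
  have hfibcard : ∀ q : {q : Q // φ q = q'},
      Nat.card {x : {x : G // F.obj x = Quotient.out q'} // t x = q} = m q := by
    intro q
    rw [hm]
    exact Nat.card_congr ((Equiv.subtypeEquivRight (hiff q)).trans
      (Equiv.subtypeSubtypeEquivSubtypeInter (fun x : G => F.obj x = Quotient.out q')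
        (fun x => Nonempty (x1 q ≅ x))))
  letI : Fintype {x : G // F.obj x = Quotient.out q'} := Fintype.ofFinite _
  have hsum : ∑ q : {q : Q // φ q = q'}, m q = n := by
    rw [← hFibCard]
    have e := Equiv.sigmaFiberEquiv t
    rw [Nat.card_congr e.symm, Nat.card_eq_fintype_card, Fintype.card_sigma]
    exact Finset.sum_congr rfl fun q _ => by
      rw [← Nat.card_eq_fintype_card, hfibcard q]
  -- rational arithmetic
  have hterm : ∀ q : {q : Q // φ q = q'},
      (1 : ℚ) / (Nat.card (Quotient.out q.1 ⟶ Quotient.out q.1) : ℚ)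
        = (m q : ℚ) / (Nat.card (Quotient.out q' ⟶ Quotient.out q') : ℚ) := by
    intro q
    haveI : Finite (Quotient.out q.1 ⟶ Quotient.out q.1) := hG.2 _
    have hA : 0 < Nat.card (Quotient.out q.1 ⟶ Quotient.out q.1) :=
      Nat.card_pos (α := Quotient.out q.1 ⟶ Quotient.out q.1)
    rw [div_eq_div_iff (by exact_mod_cast hA.ne') (by exact_mod_cast hAy.ne'), one_mul]
    rw [hconj q]
    exact_mod_cast hkey q
  calc (∑ q : {q : Q // φ q = q'},
        1 / (Nat.card (Quotient.out q.1 ⟶ Quotient.out q.1) : ℚ))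
      = ∑ q : {q : Q // φ q = q'},
        (m q : ℚ) / (Nat.card (Quotient.out q' ⟶ Quotient.out q') : ℚ) :=
        Finset.sum_congr rfl fun q _ => hterm q
    _ = (n : ℚ) / (Nat.card (Quotient.out q' ⟶ Quotient.out q') : ℚ) := by
        rw [← Finset.sum_div, ← hsum]; push_cast; ring
    _ = n * (1 / (Nat.card (Quotient.out q' ⟶ Quotient.out q') : ℚ)) := by
        rw [mul_one_div]

end GroupoidCardAux

/-- If `F : 𝒢 ⥤ 𝒢'` is an `n`-fold covering of essentially finite groupoids then
`|𝒢| = n · |𝒢'|`. -/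

theorem groupoidCard_of_isNFoldCovering {G G' : Type}
    [Groupoid.{0, 0} G] [Groupoid.{0, 0} G'] (hG : EssentiallyFinite G)
    (hG' : EssentiallyFinite G') (n : ℕ) (F : G ⥤ G') (hF : IsNFoldCovering n F) :
    groupoidCard G = n * groupoidCard G' := by
  unfold groupoidCard
  exact GroupoidCardAux.main hG hG' n F hF.1 hF.2
end

section
/- Let F: 𝒢 → 𝒢' be a functor between essentially finite groupoids and y an object of 𝒢'. Let 𝒢_y denote the full subgroupoid of 𝒢 on those objects x with F(x) isomorphic to y. Then the forgetful functor F⁻¹[y] → 𝒢_y, (x, h) ↦ x, from the homotopy fibre of y to 𝒢_y is an |Aut(y)|-fold covering of groupoids. -/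
open CategoryTheory

/-- The homotopy fibre of a functor of groupoids over an object `y` (the costructured arrow
category with objects pairs `(x, h : F.obj x ⟶ y)`) is a groupoid. -/
instance costructuredArrowGroupoid {G G' : Type} [Groupoid.{0, 0} G] [Groupoid.{0, 0} G']
    (F : G ⥤ G') (y : G') : Groupoid.{0, 0} (CostructuredArrow F y) where
  inv {A B} f :=
    CostructuredArrow.homMk (Groupoid.inv f.left)
      (by rw [← CostructuredArrow.w f, ← Category.assoc, ← F.map_comp, Groupoid.inv_comp,
            F.map_id, Category.id_comp])
  inv_comp {A B} f := by
    apply CostructuredArrow.hom_ext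
    simp [Groupoid.inv_comp]
  comp_inv {A B} f := by
    apply CostructuredArrow.hom_ext
    simp [Groupoid.comp_inv]

/-- The full subgroupoid of a groupoid on a property of objects. -/
instance fullSubcategoryGroupoid {G : Type} [Groupoid.{0, 0} G] (P : G → Prop) :
    Groupoid.{0, 0} (ObjectProperty.FullSubcategory P) where
  inv f := ObjectProperty.homMk (Groupoid.inv f.hom)
  inv_comp f := ObjectProperty.hom_ext _ (Groupoid.inv_comp f.hom)
  comp_inv f := ObjectProperty.hom_ext _ (Groupoid.comp_inv f.hom)

/-- The forgetful functor `F⁻¹[y] ⥤ 𝒢_y`, `(x, h) ↦ x`, from the homotopy fibre of `y` to the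
full subgroupoid of `𝒢` on those objects whose image is isomorphic to `y`. -/
noncomputable def homotopyFiberForget {G G' : Type} [Groupoid.{0, 0} G] [Groupoid.{0, 0} G']
    (F : G ⥤ G') (y : G') :
    CostructuredArrow F y ⥤ ObjectProperty.FullSubcategory (fun x : G => Nonempty (F.obj x ≅ y)) where
  obj p := ⟨p.left, ⟨asIso p.hom⟩⟩
  map u := ObjectProperty.homMk u.left
  map_id _ := rfl
  map_comp _ _ := rfl

/-! Over an object `x` of `𝒢_y` the fibre of the forgetful functor consists of the pairs `(x, h)`
with `h : F x ⟶ y`, a torsor under `Aut y` since `F x ≅ y`. A morphism `(x, h) ⟶ (x₁, h₁)` over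
`u : x ⟶ x₁` forces `h₁ = (F u)⁻¹ ≫ h`, so every `u` has exactly one lift starting at `(x, h)`. -/

namespace CategoryTheory.CostructuredArrow

variable {G G' : Type*} [Category G] [Groupoid G'] {F : G ⥤ G'} {y : G'}

lemma hom_eq_inv_map_left_comp {p q : CostructuredArrow F y} (f : p ⟶ q) :
    q.hom = inv (F.map f.left) ≫ p.hom := by
  rw [← CostructuredArrow.w f, IsIso.inv_hom_id_assoc]

noncomputable def liftLeft (p : CostructuredArrow F y) {x : G} (u : p.left ⟶ x) :
    p ⟶ mk (inv (F.map u) ≫ p.hom) :=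
  homMk u (IsIso.hom_inv_id_assoc _ _)

end CategoryTheory.CostructuredArrow

open CostructuredArrow

section

variable {G G' : Type} [Groupoid.{0, 0} G] [Groupoid.{0, 0} G'] (F : G ⥤ G') (y : G')

lemma homotopyFiberForget_isCovering : IsCovering (homotopyFiberForget F y) := by
  intro p
  refine (Equiv.mk _ (fun b => ⟨_, liftLeft p b.2.hom⟩) ?_ ?_).bijective
  · rintro ⟨⟨x, ⟨⟨⟩⟩, h⟩, f⟩
    have hh : h = inv (F.map f.left) ≫ p.hom := hom_eq_inv_map_left_comp f
    obtain ⟨u, r, w⟩ := f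
    dsimp only at u r w
    obtain rfl : h = inv (F.map u) ≫ p.hom := hh
    rfl
  · rintro ⟨x, u⟩
    rfl

noncomputable def homotopyFiberForgetFiberEquiv
    (x : ObjectProperty.FullSubcategory fun x : G => Nonempty (F.obj x ≅ y)) :
    {p : CostructuredArrow F y // (homotopyFiberForget F y).obj p = x} ≃ (F.obj x.obj ⟶ y) where
  toFun p := eqToHom (congrArg (F.obj ∘ ObjectProperty.FullSubcategory.obj) p.2.symm) ≫ p.1.hom
  invFun h := ⟨mk h, rfl⟩
  left_inv := by
    rintro ⟨⟨l, ⟨⟨⟩⟩, h⟩, rfl⟩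
    exact Subtype.ext (congrArg mk (Category.id_comp h))
  right_inv h := Category.id_comp h

end

theorem homotopyFiberForget_isNFoldCovering_general {G G' : Type}
    [Groupoid.{0, 0} G] [Groupoid.{0, 0} G']
    (hG' : EssentiallyFinite G') (F : G ⥤ G') (y : G') :
    IsNFoldCovering (Nat.card (y ⟶ y)) (homotopyFiberForget F y) := by
  refine ⟨homotopyFiberForget_isCovering F y, fun x => ?_⟩
  obtain ⟨i⟩ := x.property
  have : Finite (y ⟶ y) := hG'.2 y
  let e := (homotopyFiberForgetFiberEquiv F y x).trans (i.homCongr (Iso.refl y))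
  exact ⟨Finite.of_equiv _ e.symm, Nat.card_congr e⟩

/-- The forgetful functor from the homotopy fibre of `y` to the full subgroupoid `𝒢_y` is an
`|Aut y|`-fold covering of groupoids. -/
theorem homotopyFiberForget_isNFoldCovering {G G' : Type}
    [Groupoid.{0, 0} G] [Groupoid.{0, 0} G'] (hG : EssentiallyFinite G)
    (hG' : EssentiallyFinite G') (F : G ⥤ G') (y : G') :
    IsNFoldCovering (Nat.card (y ⟶ y)) (homotopyFiberForget F y) :=
  homotopyFiberForget_isNFoldCovering_general hG' F y
end

section
/- (Cavalieri's principle) Let φ: 𝒢 → 𝒢' be a functor between essentially finite groupoids. Then for every object y of 𝒢' the homotopy fibre φ⁻¹[y] is an essentially finite groupoid, its cardinality |φ⁻¹[y]| depends only on the isomorphism class of y, and |𝒢| = ∑_{[y] ∈ π₀(𝒢')} |φ⁻¹[y]| / |Aut(y)|, where the sum runs over the isomorphism classes of objects of 𝒢' with one representative y chosen in each class. -/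
open CategoryTheory

section Helpers

variable {H : Type} [Groupoid.{0, 0} H]

def homEquivRight {x y y' : H} (e : y ≅ y') : (x ⟶ y) ≃ (x ⟶ y') where
  toFun g := g ≫ e.hom
  invFun g := g ≫ e.inv
  left_inv g := by simp
  right_inv g := by simp

def homEquivLeft {x x' y : H} (e : x ≅ x') : (x ⟶ y) ≃ (x' ⟶ y) where
  toFun g := e.inv ≫ g
  invFun g := e.hom ≫ g
  left_inv g := by simp
  right_inv g := by simp

lemma homFinite (hfin : ∀ x : H, Finite (x ⟶ x)) (x y : H) : Finite (x ⟶ y) := by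
  by_cases h : Nonempty (x ⟶ y)
  · obtain ⟨f⟩ := h
    have e : x ≅ y := (Groupoid.isoEquivHom x y).symm f
    have := hfin y
    exact Finite.of_equiv _ (homEquivLeft e).symm
  · rw [not_nonempty_iff] at h
    infer_instance

lemma autCardEq {x y : H} (e : x ≅ y) : Nat.card (x ⟶ x) = Nat.card (y ⟶ y) :=
  Nat.card_congr ((homEquivLeft e).trans (homEquivRight e))

lemma homCardEqAut {x y : H} (e : x ≅ y) : Nat.card (x ⟶ y) = Nat.card (y ⟶ y) :=
  Nat.card_congr (homEquivLeft e)

lemma homCardZero {x y : H} (h : ¬ Nonempty (x ≅ y)) : Nat.card (x ⟶ y) = 0 := by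
  have : IsEmpty (x ⟶ y) := by
    rw [isEmpty_iff]
    intro f
    exact h ⟨(Groupoid.isoEquivHom x y).symm f⟩
  exact Nat.card_of_isEmpty

end Helpers

lemma master {H : Type} [Groupoid.{0, 0} H] {A : Type} [Finite A] (ι : A → H)
    (hsurj : ∀ x : H, ∃ a, Nonempty (ι a ≅ x))
    (hfinAut : ∀ x : H, Finite (x ⟶ x)) :
    EssentiallyFinite H ∧
    groupoidCard H = ∑ᶠ a : A, (1 : ℚ) / (Nat.card (Σ a' : A, (ι a ⟶ ι a')) : ℚ) := by
  classical
  letI : Setoid H := isIsomorphicSetoid H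
  have hfin : ∀ x y : H, Finite (x ⟶ y) := homFinite hfinAut
  letI : ∀ x y : H, Fintype (x ⟶ y) := fun x y => Fintype.ofFinite _
  let f : A → Quotient (isIsomorphicSetoid H) := fun a => Quotient.mk _ (ι a)
  have hfs : Function.Surjective f := by
    intro c
    obtain ⟨a, ⟨e⟩⟩ := hsurj (Quotient.out c)
    refine ⟨a, ?_⟩
    have h1 : f a = Quotient.mk (isIsomorphicSetoid H) (Quotient.out c) := Quotient.sound ⟨e⟩
    rw [h1, Quotient.out_eq]
  have hQfin : Finite (Quotient (isIsomorphicSetoid H)) := Finite.of_surjective f hfs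
  haveI := Fintype.ofFinite A
  haveI : Fintype (Quotient (isIsomorphicSetoid H)) := Fintype.ofFinite _
  refine ⟨⟨hQfin, hfinAut⟩, ?_⟩
  have hiso : ∀ a : A, Nonempty (ι a ≅ Quotient.out (f a)) := fun a =>
    Setoid.symm (Quotient.exact (Quotient.out_eq (f a)))
  set K : Quotient (isIsomorphicSetoid H) → ℕ := fun c => Nat.card ((Quotient.out c) ⟶ (Quotient.out c)) with hK
  set M : Quotient (isIsomorphicSetoid H) → ℕ := fun c => (Finset.univ.filter (fun a => f a = c)).card with hM
  have Na : ∀ a : A, Nat.card (Σ a' : A, (ι a ⟶ ι a')) = M (f a) * K (f a) := by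
    intro a
    rw [Nat.card_eq_fintype_card, Fintype.card_sigma]
    have step : ∀ a' : A, Fintype.card (ι a ⟶ ι a') = if f a' = f a then K (f a) else 0 := by
      intro a'
      by_cases h : f a' = f a
      · rw [if_pos h]
        obtain ⟨e⟩ : Nonempty (ι a ≅ ι a') := Setoid.symm (Quotient.exact h)
        obtain ⟨e'⟩ := hiso a
        rw [← Nat.card_eq_fintype_card]
        calc Nat.card (ι a ⟶ ι a') = Nat.card (ι a ⟶ ι a) :=
              Nat.card_congr (homEquivRight e.symm)
          _ = K (f a) := autCardEq e'
      · rw [if_neg h]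
        have : IsEmpty (ι a ⟶ ι a') := by
          rw [isEmpty_iff]
          intro u
          exact h (Quotient.sound (Setoid.symm ⟨(Groupoid.isoEquivHom _ _).symm u⟩))
        exact Fintype.card_eq_zero
    calc ∑ a' : A, Fintype.card (ι a ⟶ ι a')
        = ∑ a' : A, if f a' = f a then K (f a) else 0 :=
          Finset.sum_congr rfl (fun a' _ => step a')
      _ = ∑ a' ∈ Finset.univ.filter (fun a' => f a' = f a), K (f a) :=
          (Finset.sum_filter _ _).symm
      _ = M (f a) * K (f a) := by rw [Finset.sum_const, smul_eq_mul]
  have hMpos : ∀ c : Quotient (isIsomorphicSetoid H), M c ≠ 0 := by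
    intro c
    obtain ⟨a, ha⟩ := hfs c
    have hmem : a ∈ Finset.univ.filter (fun a => f a = c) := by simp [ha]
    exact Finset.card_ne_zero_of_mem hmem
  have hKpos : ∀ c : Quotient (isIsomorphicSetoid H), K c ≠ 0 := by
    intro c
    haveI : Nonempty (Quotient.out c ⟶ Quotient.out c) := ⟨𝟙 _⟩
    haveI := hfinAut (Quotient.out c)
    exact Nat.card_pos.ne'
  have hterm : ∀ a : A, (1 : ℚ) / (Nat.card (Σ a' : A, (ι a ⟶ ι a')) : ℚ)
      = (fun c => (1 : ℚ) / ((M c : ℚ) * (K c : ℚ))) (f a) := by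
    intro a
    rw [Na a]
    push_cast
    ring
  have main : ∑ a : A, (1 : ℚ) / (Nat.card (Σ a' : A, (ι a ⟶ ι a')) : ℚ)
      = ∑ c : Quotient (isIsomorphicSetoid H), (1 : ℚ) / (K c : ℚ) := by
    calc ∑ a : A, (1 : ℚ) / (Nat.card (Σ a' : A, (ι a ⟶ ι a')) : ℚ)
        = ∑ a : A, (fun c => (1 : ℚ) / ((M c : ℚ) * (K c : ℚ))) (f a) :=
          Finset.sum_congr rfl (fun a _ => hterm a)
      _ = ∑ c ∈ Finset.univ.image f,
            (Finset.univ.filter (fun a => f a = c)).card •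
              ((1 : ℚ) / ((M c : ℚ) * (K c : ℚ))) := by
            exact Finset.sum_comp (fun c => (1 : ℚ) / ((M c : ℚ) * (K c : ℚ))) f
      _ = ∑ c : Quotient (isIsomorphicSetoid H), (M c : ℚ) * ((1 : ℚ) / ((M c : ℚ) * (K c : ℚ))) := by
          rw [Finset.image_univ_of_surjective hfs]
          exact Finset.sum_congr rfl fun c _ => by rw [nsmul_eq_mul]
      _ = ∑ c : Quotient (isIsomorphicSetoid H), (1 : ℚ) / (K c : ℚ) := by
          refine Finset.sum_congr rfl fun c _ => ?_
          have hM0 : (M c : ℚ) ≠ 0 := Nat.cast_ne_zero.mpr (hMpos c)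
          rw [one_div, mul_inv, ← mul_assoc, mul_inv_cancel₀ hM0, one_mul, one_div]
  rw [groupoidCard, finsum_eq_sum_of_fintype, finsum_eq_sum_of_fintype, main]

lemma out_iso {H : Type} [Groupoid.{0, 0} H] (x : H) :
    Nonempty ((Quotient.mk (isIsomorphicSetoid H) x).out ≅ x) :=
  Quotient.exact (Quotient.out_eq (Quotient.mk (isIsomorphicSetoid H) x))

/-- Cavalieri's principle: for a functor `φ` between essentially finite groupoids all homotopy
fibres are essentially finite groupoids, their cardinality only depends on the isomorphism class
of the base point, and `|𝒢| = ∑_{[y] ∈ π₀(𝒢')} |φ⁻¹[y]| / |Aut y|`. -/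
theorem cavalieri {G G' : Type} [Groupoid.{0, 0} G] [Groupoid.{0, 0} G']
    (hG : EssentiallyFinite G) (hG' : EssentiallyFinite G') (φ : G ⥤ G') :
    (∀ y : G', EssentiallyFinite (CostructuredArrow φ y)) ∧
    (∀ y y' : G', Nonempty (y ≅ y') →
      groupoidCard (CostructuredArrow φ y) = groupoidCard (CostructuredArrow φ y')) ∧
    groupoidCard G =
      ∑ᶠ q : Quotient (isIsomorphicSetoid G'),
        groupoidCard (CostructuredArrow φ (Quotient.out q)) /
          (Nat.card (Quotient.out q ⟶ Quotient.out q) : ℚ) := by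
  classical
  haveI hQG : Finite (Quotient (isIsomorphicSetoid G)) := hG.1
  haveI hQG' : Finite (Quotient (isIsomorphicSetoid G')) := hG'.1
  haveI : Fintype (Quotient (isIsomorphicSetoid G)) := Fintype.ofFinite _
  haveI : Fintype (Quotient (isIsomorphicSetoid G')) := Fintype.ofFinite _
  have hfinG : ∀ x y : G, Finite (x ⟶ y) := homFinite hG.2
  have hfinG' : ∀ x y : G', Finite (x ⟶ y) := homFinite hG'.2
  letI : ∀ x y : G', Fintype (x ⟶ y) := fun x y => Fintype.ofFinite _
  -- the "star count" of a class in G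
  set N : Quotient (isIsomorphicSetoid G) → ℕ := fun q =>
    Nat.card (Σ q' : Quotient (isIsomorphicSetoid G), (Quotient.out q ⟶ Quotient.out q')) with hN
  -- step 1 : master applied to G itself
  have hGmaster := master (H := G) (A := Quotient (isIsomorphicSetoid G)) Quotient.out
    (fun x => ⟨Quotient.mk _ x, out_iso x⟩) hG.2
  have cardG : groupoidCard G = ∑ᶠ q : Quotient (isIsomorphicSetoid G), (1 : ℚ) / (N q : ℚ) :=
    hGmaster.2
  -- step 2 : master applied to each homotopy fibre
  have fiber : ∀ y : G',
      EssentiallyFinite (CostructuredArrow φ y) ∧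
      groupoidCard (CostructuredArrow φ y) =
        ∑ᶠ q : Quotient (isIsomorphicSetoid G),
          (Nat.card (φ.obj (Quotient.out q) ⟶ y) : ℚ) / (N q : ℚ) := by
    intro y
    haveI : ∀ q : Quotient (isIsomorphicSetoid G), Finite (φ.obj (Quotient.out q) ⟶ y) :=
      fun q => hfinG' _ _
    let ι : (Σ q : Quotient (isIsomorphicSetoid G), (φ.obj (Quotient.out q) ⟶ y)) →
        CostructuredArrow φ y := fun p => CostructuredArrow.mk p.2
    have hsurj : ∀ Z : CostructuredArrow φ y, ∃ p, Nonempty (ι p ≅ Z) := by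
      intro Z
      obtain ⟨e⟩ := out_iso (H := G) Z.left
      exact ⟨⟨Quotient.mk _ Z.left, φ.map e.hom ≫ Z.hom⟩, ⟨CostructuredArrow.isoMk e rfl⟩⟩
    have hfinAut : ∀ Z : CostructuredArrow φ y, Finite (Z ⟶ Z) := by
      intro Z
      haveI := hfinG Z.left Z.left
      exact Finite.of_injective (fun u => u.left)
        (fun u v h => CostructuredArrow.hom_ext u v h)
    have hm := master ι hsurj hfinAut
    refine ⟨hm.1, hm.2.trans ?_⟩
    have hcard : ∀ p, Nat.card (Σ p', (ι p ⟶ ι p')) = N p.1 := by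
      rintro ⟨q, h⟩
      refine Nat.card_eq_of_bijective (fun s => ⟨s.1.1, s.2.left⟩) ⟨?_, ?_⟩
      · rintro ⟨⟨q1, h1⟩, u⟩ ⟨⟨q2, h2⟩, v⟩ hst
        obtain ⟨hq, hl⟩ := Sigma.mk.inj_iff.mp hst
        subst hq
        rw [heq_iff_eq] at hl
        have hw1 : φ.map u.left ≫ h1 = h := CostructuredArrow.w u
        have hw2 : φ.map v.left ≫ h2 = h := CostructuredArrow.w v
        have h3 : φ.map u.left ≫ h1 = φ.map u.left ≫ h2 := by rw [hw1, hl, hw2]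
        rw [cancel_epi (φ.map u.left)] at h3
        subst h3
        rw [CostructuredArrow.hom_ext u v hl]
      · rintro ⟨q', v⟩
        refine ⟨⟨⟨q', φ.map (Groupoid.inv v) ≫ h⟩, CostructuredArrow.homMk v ?_⟩, rfl⟩
        show φ.map v ≫ (φ.map (Groupoid.inv v) ≫ h) = h
        rw [← Category.assoc, ← φ.map_comp, Groupoid.comp_inv, φ.map_id, Category.id_comp]
    rw [finsum_eq_sum_of_fintype, finsum_eq_sum_of_fintype, ← Finset.univ_sigma_univ,
      Finset.sum_sigma]
    refine Finset.sum_congr rfl fun q _ => ?_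
    calc ∑ h : (φ.obj (Quotient.out q) ⟶ y),
          (1 : ℚ) / (Nat.card (Σ p', (ι ⟨q, h⟩ ⟶ ι p')) : ℚ)
        = ∑ _h : (φ.obj (Quotient.out q) ⟶ y), (1 : ℚ) / (N q : ℚ) :=
          Finset.sum_congr rfl fun h _ => by rw [hcard ⟨q, h⟩]
      _ = (Nat.card (φ.obj (Quotient.out q) ⟶ y) : ℚ) / (N q : ℚ) := by
          rw [Finset.sum_const, Finset.card_univ, nsmul_eq_mul, Nat.card_eq_fintype_card]
          ring
  -- step 3 : the hom-counting identity in G'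
  have classes_sum : ∀ a : G',
      ∑ c : Quotient (isIsomorphicSetoid G'),
        (Nat.card (a ⟶ Quotient.out c) : ℚ) /
          (Nat.card (Quotient.out c ⟶ Quotient.out c) : ℚ) = 1 := by
    intro a
    rw [Finset.sum_eq_single (Quotient.mk (isIsomorphicSetoid G') a)]
    · obtain ⟨e⟩ := out_iso (H := G') a
      rw [homCardEqAut e.symm]
      have hKne : (Nat.card ((Quotient.mk (isIsomorphicSetoid G') a).out ⟶
          (Quotient.mk (isIsomorphicSetoid G') a).out) : ℚ) ≠ 0 := by
        haveI : Nonempty ((Quotient.mk (isIsomorphicSetoid G') a).out ⟶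
            (Quotient.mk (isIsomorphicSetoid G') a).out) := ⟨𝟙 _⟩
        haveI := hG'.2 (Quotient.mk (isIsomorphicSetoid G') a).out
        exact_mod_cast Nat.card_pos.ne'
      exact div_self hKne
    · intro c _ hc
      have hno : ¬ Nonempty (a ≅ Quotient.out c) := by
        rintro ⟨e⟩
        have h1 : Quotient.mk (isIsomorphicSetoid G') a =
            Quotient.mk (isIsomorphicSetoid G') (Quotient.out c) := Quotient.sound ⟨e⟩
        exact hc (h1.trans (Quotient.out_eq c)).symm
      rw [homCardZero hno, Nat.cast_zero, zero_div]
    · intro h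
      exact absurd (Finset.mem_univ _) h
  -- assemble the three statements
  refine ⟨fun y => (fiber y).1, fun y y' e => ?_, ?_⟩
  · obtain ⟨e⟩ := e
    rw [(fiber y).2, (fiber y').2]
    exact finsum_congr fun q => by rw [Nat.card_congr (homEquivRight (x := φ.obj q.out) e)]
  · rw [cardG, finsum_eq_sum_of_fintype, finsum_eq_sum_of_fintype]
    symm
    calc ∑ c : Quotient (isIsomorphicSetoid G'),
          groupoidCard (CostructuredArrow φ (Quotient.out c)) /
            (Nat.card (Quotient.out c ⟶ Quotient.out c) : ℚ)
        = ∑ c : Quotient (isIsomorphicSetoid G'), ∑ q : Quotient (isIsomorphicSetoid G),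
            ((Nat.card (φ.obj (Quotient.out q) ⟶ Quotient.out c) : ℚ) / (N q : ℚ)) /
              (Nat.card (Quotient.out c ⟶ Quotient.out c) : ℚ) := by
          refine Finset.sum_congr rfl fun c _ => ?_
          rw [(fiber (Quotient.out c)).2, finsum_eq_sum_of_fintype, Finset.sum_div]
      _ = ∑ q : Quotient (isIsomorphicSetoid G), ∑ c : Quotient (isIsomorphicSetoid G'),
            ((Nat.card (φ.obj (Quotient.out q) ⟶ Quotient.out c) : ℚ) / (N q : ℚ)) /
              (Nat.card (Quotient.out c ⟶ Quotient.out c) : ℚ) := Finset.sum_comm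
      _ = ∑ q : Quotient (isIsomorphicSetoid G), (1 : ℚ) / (N q : ℚ) := by
          refine Finset.sum_congr rfl fun q _ => ?_
          have hper : ∀ c : Quotient (isIsomorphicSetoid G'),
              ((Nat.card (φ.obj (Quotient.out q) ⟶ Quotient.out c) : ℚ) / (N q : ℚ)) /
                (Nat.card (Quotient.out c ⟶ Quotient.out c) : ℚ)
              = ((1 : ℚ) / (N q : ℚ)) *
                ((Nat.card (φ.obj (Quotient.out q) ⟶ Quotient.out c) : ℚ) /
                  (Nat.card (Quotient.out c ⟶ Quotient.out c) : ℚ)) := fun c => by ring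
          rw [Finset.sum_congr rfl fun c _ => hper c, ← Finset.mul_sum,
            classes_sum (φ.obj (Quotient.out q)), mul_one]
end

section
/- (Generalised Cavalieri's principle) Let φ: 𝒢 → 𝒢' be a functor between essentially finite groupoids and f: Obj(𝒢) → ℂ a gauge invariant function. Then ∑_{[x] ∈ π₀(𝒢)} f(x)/|Aut(x)| = ∑_{[y] ∈ π₀(𝒢')} ( ∑_{[(x,h)] ∈ π₀(φ⁻¹[y])} f(x)/|Aut(x,h)| ) / |Aut(y)|, where the inner sum runs over the isomorphism classes of objects of the homotopy fibre φ⁻¹[y]; here the function (x,h) ↦ f(x) on φ⁻¹[y] is gauge invariant, and the outer summands do not depend on the chosen representatives y. -/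
open CategoryTheory

/-- A function on the objects of a groupoid is gauge invariant if it is constant on
isomorphism classes. -/
def GaugeInvariant {G : Type} [Groupoid.{0, 0} G] (f : G → ℂ) : Prop :=
  ∀ x y : G, Nonempty (x ≅ y) → f x = f y

/-- The integral `∑_{[x] ∈ π₀(𝒢)} f(x) / |Aut x|` of a gauge invariant function over a
groupoid. -/
noncomputable def groupoidIntegral {G : Type} [Groupoid.{0, 0} G] (f : G → ℂ) : ℂ :=
  ∑ᶠ q : Quotient (isIsomorphicSetoid G),
    f (Quotient.out q) / (Nat.card (Quotient.out q ⟶ Quotient.out q) : ℂ)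

section Auxiliary

open MulAction

variable {G G' : Type} [Groupoid.{0, 0} G] [Groupoid.{0, 0} G']

lemma card_aut_congr {x y : G} (i : x ≅ y) :
    Nat.card (x ⟶ x) = Nat.card (y ⟶ y) :=
  Nat.card_congr (i.homCongr i)

lemma finite_hom (hC : ∀ x : G, Finite (x ⟶ x)) (a b : G) : Finite (a ⟶ b) := by
  rcases isEmpty_or_nonempty (a ⟶ b) with h | hne
  · infer_instance
  · obtain ⟨f⟩ := hne
    have := hC a
    exact Finite.of_equiv _ ((Iso.refl a).homCongr ((Groupoid.isoEquivHom a b).symm f))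

lemma out_mk_iso {C : Type} [Groupoid.{0, 0} C] (x : C) :
    Nonempty ((Quotient.mk (isIsomorphicSetoid C) x).out ≅ x) :=
  Quotient.mk_out (s := isIsomorphicSetoid C) x

lemma gauge_fibre (φ : G ⥤ G') (f : G → ℂ) (hf : GaugeInvariant f) (y : G') :
    GaugeInvariant (fun p : CostructuredArrow φ y => f p.left) := by
  rintro p p' ⟨i⟩
  exact hf _ _ ⟨(CostructuredArrow.proj φ y).mapIso i⟩

/-- The equivalence on isomorphism classes induced by an equivalence of groupoids. -/
def pi0Equiv {C D : Type} [Groupoid.{0, 0} C] [Groupoid.{0, 0} D] (E : C ≌ D) :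
    Quotient (isIsomorphicSetoid C) ≃ Quotient (isIsomorphicSetoid D) where
  toFun := Quotient.map E.functor.obj (fun _ _ h => h.elim fun i => ⟨E.functor.mapIso i⟩)
  invFun := Quotient.map E.inverse.obj (fun _ _ h => h.elim fun i => ⟨E.inverse.mapIso i⟩)
  left_inv q := by
    induction q using Quotient.inductionOn with
    | h x => exact Quotient.sound ⟨(E.unitIso.app x).symm⟩
  right_inv q := by
    induction q using Quotient.inductionOn with
    | h x => exact Quotient.sound ⟨E.counitIso.app x⟩

lemma groupoidIntegral_comp_equivalence {C D : Type} [Groupoid.{0, 0} C] [Groupoid.{0, 0} D]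
    (E : C ≌ D) (f : D → ℂ) (hf : GaugeInvariant f) :
    groupoidIntegral (fun x => f (E.functor.obj x)) = groupoidIntegral f := by
  unfold groupoidIntegral
  rw [← finsum_comp_equiv (pi0Equiv E)]
  refine finsum_congr fun q => ?_
  have h1 : pi0Equiv E q = Quotient.mk _ (E.functor.obj q.out) := by
    conv_lhs => rw [← Quotient.out_eq q]
    rfl
  obtain ⟨i⟩ : Nonempty ((pi0Equiv E q).out ≅ E.functor.obj q.out) := by
    rw [h1]; exact out_mk_iso _
  have hcard : Nat.card (Quotient.out q ⟶ Quotient.out q)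
      = Nat.card ((pi0Equiv E q).out ⟶ (pi0Equiv E q).out) := by
    rw [card_aut_congr i]
    exact Nat.card_congr E.fullyFaithfulFunctor.homEquiv
  rw [hcard, hf _ _ ⟨i⟩]

variable (φ : G ⥤ G')

/-- The map on isomorphism classes induced by the projection from the homotopy fibre. -/
def fibLeftCls (y : G') :
    Quotient (isIsomorphicSetoid (CostructuredArrow φ y)) → Quotient (isIsomorphicSetoid G) :=
  Quotient.lift (fun p => Quotient.mk _ p.left)
    (fun _ _ h => h.elim fun i => Quotient.sound ⟨(CostructuredArrow.proj φ y).mapIso i⟩)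

/-- The automorphism group of `x₀` acts on the arrows `φ.obj x₀ ⟶ y` by precomposition. -/
instance fibAction (x₀ : G) (y : G') : MulAction (x₀ ⟶ x₀) (φ.obj x₀ ⟶ y) where
  smul u h := φ.map u ≫ h
  one_smul h := show φ.map (𝟙 x₀) ≫ h = h by simp
  mul_smul u v h := show φ.map (u ≫ v) ≫ h = φ.map u ≫ (φ.map v ≫ h) by simp

/-- The stabilizer of `h` is the automorphism group of `(x₀, h)` in the homotopy fibre. -/
def stabEquiv {x₀ : G} {y : G'} (h : φ.obj x₀ ⟶ y) :
    MulAction.stabilizer (x₀ ⟶ x₀) h ≃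
      (CostructuredArrow.mk h ⟶ CostructuredArrow.mk h) where
  toFun u := CostructuredArrow.homMk u.1 u.2
  invFun v := ⟨v.left, CostructuredArrow.w v⟩
  left_inv u := Subtype.ext rfl
  right_inv v := by apply CostructuredArrow.hom_ext; rfl

/-- The orbits of the action correspond to the isomorphism classes in the fibre sitting
over the class of `x₀`. -/
noncomputable def orbitClsEquiv (x₀ : G) (y : G') :
    MulAction.orbitRel.Quotient (x₀ ⟶ x₀) (φ.obj x₀ ⟶ y) ≃
      {r : Quotient (isIsomorphicSetoid (CostructuredArrow φ y)) //
        fibLeftCls φ y r = Quotient.mk _ x₀} := by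
  refine Equiv.ofBijective
    (fun ω => ⟨Quotient.liftOn ω (fun h => Quotient.mk _ (CostructuredArrow.mk h))
      (fun h h' hr => ?_), ?_⟩) ⟨?_, ?_⟩
  · obtain ⟨u, hu⟩ := hr
    exact Quotient.sound
      ⟨(Groupoid.isoEquivHom _ _).symm (CostructuredArrow.homMk u hu)⟩
  · obtain ⟨h, rfl⟩ := Quotient.exists_rep ω
    rfl
  · intro ω ω' hww
    obtain ⟨h, rfl⟩ := Quotient.exists_rep ω
    obtain ⟨h', rfl⟩ := Quotient.exists_rep ω'
    obtain ⟨i⟩ : Nonempty (CostructuredArrow.mk h ≅ CostructuredArrow.mk h') :=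
      Quotient.exact (congrArg Subtype.val hww)
    exact Quotient.sound ⟨i.hom.left, CostructuredArrow.w i.hom⟩
  · rintro ⟨r, hr⟩
    obtain ⟨p, rfl⟩ := Quotient.exists_rep r
    obtain ⟨i⟩ : Nonempty (p.left ≅ x₀) := Quotient.exact hr
    refine ⟨Quotient.mk _ (φ.map i.inv ≫ p.hom), Subtype.ext ?_⟩
    exact Quotient.sound
      ⟨(Groupoid.isoEquivHom _ _).symm (CostructuredArrow.homMk i.inv rfl)⟩

lemma fiber_block (f : G → ℂ) (hf : GaugeInvariant f)
    (hG2 : ∀ x : G, Finite (x ⟶ x)) (hG'2 : ∀ x : G', Finite (x ⟶ x))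
    (y : G') (x₀ : G) :
    ∑ᶠ r : {r : Quotient (isIsomorphicSetoid (CostructuredArrow φ y)) //
        fibLeftCls φ y r = Quotient.mk _ x₀},
      f (Quotient.out r.1).left /
        (Nat.card ((Quotient.out r.1) ⟶ (Quotient.out r.1)) : ℂ)
    = f x₀ * (Nat.card (φ.obj x₀ ⟶ y) : ℂ) / (Nat.card (x₀ ⟶ x₀) : ℂ) := by
  haveI : Finite (x₀ ⟶ x₀) := hG2 x₀
  haveI : Finite (φ.obj x₀ ⟶ y) := finite_hom hG'2 _ _
  rw [← finsum_comp_equiv (orbitClsEquiv φ x₀ y)]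
  have key : ∀ ω : MulAction.orbitRel.Quotient (x₀ ⟶ x₀) (φ.obj x₀ ⟶ y),
      f (Quotient.out ((orbitClsEquiv φ x₀ y) ω).1).left /
        (Nat.card ((Quotient.out ((orbitClsEquiv φ x₀ y) ω).1) ⟶
          (Quotient.out ((orbitClsEquiv φ x₀ y) ω).1)) : ℂ)
      = f x₀ / (Nat.card (MulAction.stabilizer (x₀ ⟶ x₀) ω.out) : ℂ) := by
    intro ω
    have h1 : ((orbitClsEquiv φ x₀ y) ω).1
        = Quotient.mk _ (CostructuredArrow.mk ω.out) := by
      conv_lhs => rw [← Quotient.out_eq ω]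
      rfl
    obtain ⟨j⟩ := out_mk_iso (CostructuredArrow.mk (Quotient.out ω) : CostructuredArrow φ y)
    rw [h1]
    have hnum : f (Quotient.out (Quotient.mk (isIsomorphicSetoid (CostructuredArrow φ y))
        (CostructuredArrow.mk ω.out))).left = f x₀ :=
      hf _ _ ⟨(CostructuredArrow.proj φ y).mapIso j⟩
    rw [hnum, card_aut_congr j, Nat.card_congr (stabEquiv φ ω.out).symm]
  rw [finsum_congr key]
  rcases isEmpty_or_nonempty (φ.obj x₀ ⟶ y) with hH | hH
  · haveI : IsEmpty (MulAction.orbitRel.Quotient (x₀ ⟶ x₀) (φ.obj x₀ ⟶ y)) :=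
      ⟨fun ω => IsEmpty.false ω.out⟩
    rw [finsum_of_isEmpty, Nat.card_of_isEmpty]
    simp
  · haveI : Finite (MulAction.orbitRel.Quotient (x₀ ⟶ x₀) (φ.obj x₀ ⟶ y)) :=
      Quotient.finite _
    letI := Fintype.ofFinite (MulAction.orbitRel.Quotient (x₀ ⟶ x₀) (φ.obj x₀ ⟶ y))
    letI := Fintype.ofFinite (x₀ ⟶ x₀)
    letI := Fintype.ofFinite (φ.obj x₀ ⟶ y)
    letI : ∀ ω : MulAction.orbitRel.Quotient (x₀ ⟶ x₀) (φ.obj x₀ ⟶ y),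
        Fintype (orbit (x₀ ⟶ x₀) ω.out) := fun _ => Fintype.ofFinite _
    letI : ∀ ω : MulAction.orbitRel.Quotient (x₀ ⟶ x₀) (φ.obj x₀ ⟶ y),
        Fintype (MulAction.stabilizer (x₀ ⟶ x₀) ω.out) := fun _ => Fintype.ofFinite _
    haveI : Nonempty (x₀ ⟶ x₀) := ⟨𝟙 x₀⟩
    have hA0 : (Nat.card (x₀ ⟶ x₀) : ℂ) ≠ 0 :=
      Nat.cast_ne_zero.mpr Nat.card_pos.ne'
    have horb : ∀ ω : MulAction.orbitRel.Quotient (x₀ ⟶ x₀) (φ.obj x₀ ⟶ y),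
        Nat.card (orbit (x₀ ⟶ x₀) ω.out) * Nat.card (MulAction.stabilizer (x₀ ⟶ x₀) ω.out)
          = Nat.card (x₀ ⟶ x₀) := by
      intro ω
      simp only [Nat.card_eq_fintype_card]
      exact MulAction.card_orbit_mul_card_stabilizer_eq_card_group _ _
    have hs0 : ∀ ω : MulAction.orbitRel.Quotient (x₀ ⟶ x₀) (φ.obj x₀ ⟶ y),
        (Nat.card (MulAction.stabilizer (x₀ ⟶ x₀) ω.out) : ℂ) ≠ 0 := fun ω =>
      Nat.cast_ne_zero.mpr Nat.card_pos.ne'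
    have hterm : ∀ ω : MulAction.orbitRel.Quotient (x₀ ⟶ x₀) (φ.obj x₀ ⟶ y),
        f x₀ / (Nat.card (MulAction.stabilizer (x₀ ⟶ x₀) ω.out) : ℂ)
          = f x₀ * ((Nat.card (orbit (x₀ ⟶ x₀) ω.out) : ℂ) / (Nat.card (x₀ ⟶ x₀) : ℂ)) := by
      intro ω
      have h2 : (Nat.card (orbit (x₀ ⟶ x₀) ω.out) : ℂ) / (Nat.card (x₀ ⟶ x₀) : ℂ)
          = 1 / (Nat.card (MulAction.stabilizer (x₀ ⟶ x₀) ω.out) : ℂ) := by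
        rw [div_eq_div_iff hA0 (hs0 ω), one_mul]
        exact_mod_cast horb ω
      rw [h2, mul_one_div]
    rw [finsum_congr hterm, finsum_eq_sum_of_fintype, ← Finset.mul_sum, ← Finset.sum_div]
    have hn : (Nat.card (φ.obj x₀ ⟶ y) : ℂ)
        = ∑ ω : MulAction.orbitRel.Quotient (x₀ ⟶ x₀) (φ.obj x₀ ⟶ y),
            (Nat.card (orbit (x₀ ⟶ x₀) ω.out) : ℂ) := by
      rw [← Nat.cast_sum]
      congr 1
      rw [Nat.card_eq_fintype_card,
        Fintype.card_congr (selfEquivSigmaOrbits (x₀ ⟶ x₀) (φ.obj x₀ ⟶ y)),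
        Fintype.card_sigma]
      simp [Nat.card_eq_fintype_card]
    rw [hn, mul_div_assoc]

lemma finite_pi0_fib (hG1 : Finite (Quotient (isIsomorphicSetoid G)))
    (hG2 : ∀ x : G, Finite (x ⟶ x)) (hG'2 : ∀ x : G', Finite (x ⟶ x)) (y : G') :
    Finite (Quotient (isIsomorphicSetoid (CostructuredArrow φ y))) := by
  haveI : ∀ q : Quotient (isIsomorphicSetoid G),
      Finite {r : Quotient (isIsomorphicSetoid (CostructuredArrow φ y)) //
        fibLeftCls φ y r = q} := by
    intro q
    rw [← Quotient.out_eq q]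
    haveI : Finite (q.out ⟶ q.out) := hG2 _
    haveI : Finite (φ.obj q.out ⟶ y) := finite_hom hG'2 _ _
    exact Finite.of_equiv _ (orbitClsEquiv φ q.out y)
  exact Finite.of_equiv _ (Equiv.sigmaFiberEquiv (fibLeftCls φ y))

lemma fibre_integral (f : G → ℂ) (hf : GaugeInvariant f)
    (hG1 : Finite (Quotient (isIsomorphicSetoid G)))
    (hG2 : ∀ x : G, Finite (x ⟶ x)) (hG'2 : ∀ x : G', Finite (x ⟶ x)) (y : G') :
    groupoidIntegral (fun p : CostructuredArrow φ y => f p.left)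
      = ∑ᶠ q : Quotient (isIsomorphicSetoid G),
          f q.out * (Nat.card (φ.obj q.out ⟶ y) : ℂ) / (Nat.card (q.out ⟶ q.out) : ℂ) := by
  haveI := hG1
  haveI := finite_pi0_fib φ hG1 hG2 hG'2 y
  letI := Fintype.ofFinite (Quotient (isIsomorphicSetoid (CostructuredArrow φ y)))
  letI := Fintype.ofFinite (Quotient (isIsomorphicSetoid G))
  letI : DecidableEq (Quotient (isIsomorphicSetoid G)) := Classical.decEq _
  unfold groupoidIntegral
  rw [finsum_eq_sum_of_fintype, finsum_eq_sum_of_fintype,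
    ← Fintype.sum_fiberwise (fibLeftCls φ y)]
  refine Finset.sum_congr rfl fun q _ => ?_
  have hb := fiber_block φ f hf hG2 hG'2 y q.out
  rw [Quotient.out_eq q] at hb
  rw [← finsum_eq_sum_of_fintype]
  exact hb

end Auxiliary

/-- Generalised Cavalieri's principle: the integral of a gauge invariant function equals the
iterated integral over the homotopy fibres, whose integrand is gauge invariant, and whose
values only depend on the isomorphism class of the base point. -/
theorem generalized_cavalieri {G G' : Type} [Groupoid.{0, 0} G] [Groupoid.{0, 0} G']
    (hG : EssentiallyFinite G) (hG' : EssentiallyFinite G') (φ : G ⥤ G')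
    (f : G → ℂ) (hf : GaugeInvariant f) :
    (∀ y : G', GaugeInvariant (fun p : CostructuredArrow φ y => f p.left)) ∧
    (∀ y y' : G', Nonempty (y ≅ y') →
      groupoidIntegral (fun p : CostructuredArrow φ y => f p.left) =
        groupoidIntegral (fun p : CostructuredArrow φ y' => f p.left)) ∧
    groupoidIntegral f =
      ∑ᶠ q : Quotient (isIsomorphicSetoid G'),
        groupoidIntegral (fun p : CostructuredArrow φ (Quotient.out q) => f p.left) /
          (Nat.card (Quotient.out q ⟶ Quotient.out q) : ℂ) := by
  obtain ⟨hG1, hG2⟩ := hG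
  obtain ⟨hG'1, hG'2⟩ := hG'
  refine ⟨gauge_fibre φ f hf, fun y y' hi => ?_, ?_⟩
  · obtain ⟨i⟩ := hi
    exact groupoidIntegral_comp_equivalence (CostructuredArrow.mapIso (S := φ) i)
      (fun p : CostructuredArrow φ y' => f p.left) (gauge_fibre φ f hf y')
  · haveI := hG1
    haveI := hG'1
    letI := Fintype.ofFinite (Quotient (isIsomorphicSetoid G))
    letI := Fintype.ofFinite (Quotient (isIsomorphicSetoid G'))
    letI : DecidableEq (Quotient (isIsomorphicSetoid G')) := Classical.decEq _
    have hL : groupoidIntegral f = ∑ q : Quotient (isIsomorphicSetoid G),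
        f q.out / (Nat.card (q.out ⟶ q.out) : ℂ) := by
      unfold groupoidIntegral
      exact finsum_eq_sum_of_fintype _
    have hR : ∀ q' : Quotient (isIsomorphicSetoid G'),
        groupoidIntegral (fun p : CostructuredArrow φ q'.out => f p.left)
          = ∑ q : Quotient (isIsomorphicSetoid G),
              f q.out * (Nat.card (φ.obj q.out ⟶ q'.out) : ℂ) /
                (Nat.card (q.out ⟶ q.out) : ℂ) := fun q' => by
      rw [fibre_integral φ f hf hG1 hG2 hG'2 q'.out]
      exact finsum_eq_sum_of_fintype _
    rw [finsum_eq_sum_of_fintype, hL]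
    calc
      (∑ q : Quotient (isIsomorphicSetoid G), f q.out / (Nat.card (q.out ⟶ q.out) : ℂ))
          = ∑ q : Quotient (isIsomorphicSetoid G), ∑ q' : Quotient (isIsomorphicSetoid G'),
              (if Quotient.mk (isIsomorphicSetoid G') (φ.obj q.out) = q' then
                f q.out / (Nat.card (q.out ⟶ q.out) : ℂ) else 0) := by
            refine Finset.sum_congr rfl fun q _ => ?_
            rw [Finset.sum_ite_eq, if_pos (Finset.mem_univ _)]
      _ = ∑ q' : Quotient (isIsomorphicSetoid G'), ∑ q : Quotient (isIsomorphicSetoid G),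
              (if Quotient.mk (isIsomorphicSetoid G') (φ.obj q.out) = q' then
                f q.out / (Nat.card (q.out ⟶ q.out) : ℂ) else 0) := Finset.sum_comm
      _ = ∑ q' : Quotient (isIsomorphicSetoid G'),
            (∑ q : Quotient (isIsomorphicSetoid G),
              f q.out * (Nat.card (φ.obj q.out ⟶ q'.out) : ℂ) /
                (Nat.card (q.out ⟶ q.out) : ℂ)) /
              (Nat.card (q'.out ⟶ q'.out) : ℂ) := by
            refine Finset.sum_congr rfl fun q' _ => ?_
            rw [Finset.sum_div]
            refine Finset.sum_congr rfl fun q _ => ?_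
            haveI : Finite (q.out ⟶ q.out) := hG2 _
            haveI : Finite (q'.out ⟶ q'.out) := hG'2 _
            haveI : Nonempty (q.out ⟶ q.out) := ⟨𝟙 _⟩
            haveI : Nonempty (q'.out ⟶ q'.out) := ⟨𝟙 _⟩
            have hcq : (Nat.card (q.out ⟶ q.out) : ℂ) ≠ 0 :=
              Nat.cast_ne_zero.mpr Nat.card_pos.ne'
            have hcy : (Nat.card (q'.out ⟶ q'.out) : ℂ) ≠ 0 :=
              Nat.cast_ne_zero.mpr Nat.card_pos.ne'
            by_cases hc : Quotient.mk (isIsomorphicSetoid G') (φ.obj q.out) = q'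
            · rw [if_pos hc]
              obtain ⟨i⟩ : Nonempty (φ.obj q.out ≅ q'.out) :=
                Quotient.exact (hc.trans (Quotient.out_eq q').symm)
              have hH : (Nat.card (φ.obj q.out ⟶ q'.out) : ℂ)
                  = (Nat.card (q'.out ⟶ q'.out) : ℂ) := by
                exact_mod_cast congrArg Nat.cast
                  (Nat.card_congr (Iso.homCongr i (Iso.refl q'.out)))
              rw [hH]
              field_simp
            · rw [if_neg hc]
              haveI : IsEmpty (φ.obj q.out ⟶ q'.out) := by
                by_contra hne
                rw [not_isEmpty_iff] at hne
                obtain ⟨h⟩ := hne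
                have hiso : IsIsomorphic (φ.obj q.out) q'.out :=
                  ⟨(Groupoid.isoEquivHom _ _).symm h⟩
                exact hc ((Quotient.sound hiso).trans (Quotient.out_eq q'))
              rw [Nat.card_of_isEmpty]
              simp
      _ = ∑ q' : Quotient (isIsomorphicSetoid G'),
            groupoidIntegral (fun p : CostructuredArrow φ q'.out => f p.left) /
              (Nat.card (q'.out ⟶ q'.out) : ℂ) := by
            refine Finset.sum_congr rfl fun q' _ => ?_
            rw [hR q']
end

section
/- Let N, M ≥ 1 be integers, let ι: ℤ/N × ℤ/N → ℤ/(NM) × ℤ/(NM) be the injective group homomorphism (a, b) ↦ (M·a, M·b), and let k ∈ {0, …, N−1}. Then there exists a 2-cocycle ω̂: (ℤ/(NM) × ℤ/(NM))² → ℂˣ (i.e. ω̂(y, z) · ω̂(x·y, z)⁻¹ · ω̂(x, y·z) · ω̂(x, y)⁻¹ = 1 for all x, y, z) whose pullback along ι equals ω_k^{(N)} if and only if there exists an integer k′ with k′M ≡ k (mod N). -/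
/-- The 2-cochain `ω_k^{(K)}((a₁, b₁), (a₂, b₂)) = exp(2πi k ā₁ b̄₂ / K)` on `ℤ/K × ℤ/K` with
values in nonzero complex numbers. -/
noncomputable def omegaK (K : ℕ) (k : ℤ) :
    ZMod K × ZMod K → ZMod K × ZMod K → ℂ :=
  fun x y =>
    Complex.exp (2 * (Real.pi : ℂ) * Complex.I * (k : ℂ) * (x.1.val : ℂ) * (y.2.val : ℂ) / (K : ℂ))

/-- The injective group homomorphism `ι : ℤ/N × ℤ/N → ℤ/(NM) × ℤ/(NM)`, `(a, b) ↦ (M·a, M·b)`. -/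
def iotaPair (N M : ℕ) : ZMod N × ZMod N → ZMod (N * M) × ZMod (N * M) :=
  fun p => (((M * p.1.val : ℕ) : ZMod (N * M)), ((M * p.2.val : ℕ) : ZMod (N * M)))

/-!
The antisymmetrisation `β(a, b) = ω(a, b) / ω(b, a)` of a 2-cocycle on an abelian group is a
bicharacter. If `ω̂` pulls back to `ω_k^{(N)}` along `ι`, then with `e₁ = (1, 0)`, `e₂ = (0, 1)`,
`β(e₁, e₂)` is an `NM`-th root of unity `exp(2πi t/NM)`, and
`exp(2πi k/N) = β(ι e₁, ι e₂) = β(e₁, e₂)^{M²} = exp(2πi tM/N)`, so `tM ≡ k (mod N)`.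
Conversely, if `k'M ≡ k (mod N)` then `ω_{k'}^{(NM)}` itself pulls back to `ω_k^{(N)}`.
-/

open ZMod

section TwoCocycle

variable {G K : Type*} [Field K]

def IsTwoCocycle [Add G] (ω : G → G → K) : Prop :=
  ∀ x y z, ω y z * (ω (x + y) z)⁻¹ * ω x (y + z) * (ω x y)⁻¹ = 1

def skewPairing (ω : G → G → K) (a b : G) : K := ω a b / ω b a

lemma skewPairing_swap (ω : G → G → K) (a b : G) :
    skewPairing ω b a = (skewPairing ω a b)⁻¹ :=
  (inv_div _ _).symm

lemma isTwoCocycle_addChar_comp [Add G] {A : Type*} [AddCommGroup A] (ψ : AddChar A K)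
    (f : G → G → A) (hf₁ : ∀ x y z, f (x + y) z = f x z + f y z)
    (hf₂ : ∀ x y z, f x (y + z) = f x y + f x z) :
    IsTwoCocycle fun x y => ψ (f x y) := by
  intro x y z
  simp only [← AddChar.map_neg_eq_inv, ← AddChar.map_add_eq_mul, hf₁, hf₂]
  convert ψ.map_zero_eq_one using 2
  abel

namespace IsTwoCocycle

section Add

variable [Add G] {ω : G → G → K} (hω : IsTwoCocycle ω)
include hω

lemma ne_zero (x y : G) : ω x y ≠ 0 := fun h => by simpa [h] using hω x y x

lemma mul_eq (x y z : G) : ω (x + y) z * ω x y = ω y z * ω x (y + z) := by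
  have h := hω x y z
  have := hω.ne_zero (x + y) z
  have := hω.ne_zero x y
  field_simp at h
  linear_combination -h

end Add

variable [AddCommMonoid G] {ω : G → G → K} (hω : IsTwoCocycle ω)
include hω

lemma skewPairing_add_left (a a' b : G) :
    skewPairing ω (a + a') b = skewPairing ω a b * skewPairing ω a' b := by
  have h₁ := hω.mul_eq a a' b
  have h₂ := hω.mul_eq b a a'
  have h₃ := hω.mul_eq a b a'
  rw [add_comm b a] at h₂
  rw [add_comm b a'] at h₃
  have := hω.ne_zero a a'
  have := hω.ne_zero b (a + a')
  have := hω.ne_zero b a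
  have := hω.ne_zero b a'
  unfold skewPairing
  field_simp
  apply mul_left_cancel₀ (hω.ne_zero a a')
  linear_combination (ω b a' * ω b a) * h₁ + (ω a b * ω a' b) * h₂ - (ω a' b * ω b a) * h₃

lemma skewPairing_zero_left (b : G) : skewPairing ω 0 b = 1 := by
  have h := hω.skewPairing_add_left 0 0 b
  rw [add_zero] at h
  exact (mul_eq_left₀ (div_ne_zero (hω.ne_zero 0 b) (hω.ne_zero b 0))).1 h.symm

def skewPairingLeft (b : G) : AddChar G K where
  toFun a := skewPairing ω a b
  map_zero_eq_one' := hω.skewPairing_zero_left b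
  map_add_eq_mul' a a' := hω.skewPairing_add_left a a' b

lemma skewPairing_nsmul_left (n : ℕ) (a b : G) :
    skewPairing ω (n • a) b = skewPairing ω a b ^ n :=
  (hω.skewPairingLeft b).map_nsmul_eq_pow n a

lemma skewPairing_nsmul_nsmul (m n : ℕ) (a b : G) :
    skewPairing ω (m • a) (n • b) = skewPairing ω a b ^ (m * n) := by
  rw [hω.skewPairing_nsmul_left, skewPairing_swap ω (n • b), hω.skewPairing_nsmul_left,
    skewPairing_swap ω a b, inv_pow, inv_pow, inv_pow, inv_inv, ← pow_mul, mul_comm]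

end IsTwoCocycle

end TwoCocycle

section StdAddChar

variable {N : ℕ} [NeZero N]

lemma exists_stdAddChar_eq_of_pow_eq_one {c : ℂ} (hc : c ^ N = 1) :
    ∃ j : ZMod N, stdAddChar j = c := by
  obtain ⟨i, -, rfl⟩ := (Complex.isPrimitiveRoot_exp N (NeZero.ne N)).eq_pow_of_pow_eq_one hc
  refine ⟨i, ?_⟩
  rw [← Int.cast_natCast, stdAddChar_coe, ← Complex.exp_nat_mul]
  congr 1
  push_cast
  ring

lemma stdAddChar_natCast_mul_intCast (M : ℕ) [NeZero M] (n : ℤ) :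
    stdAddChar ((M : ZMod (N * M)) * (n : ZMod (N * M))) = stdAddChar (n : ZMod N) := by
  have : (M : ℂ) ≠ 0 := Nat.cast_ne_zero.2 (NeZero.ne M)
  rw [← Int.cast_natCast, ← Int.cast_mul, stdAddChar_coe, stdAddChar_coe]
  congr 1
  push_cast
  field_simp

lemma omegaK_eq_stdAddChar (k : ℤ) (x y : ZMod N × ZMod N) :
    omegaK N k x y = stdAddChar ((k : ZMod N) * x.1 * y.2) := by
  have : (k : ZMod N) * x.1 * y.2 = ((k * x.1.val * y.2.val : ℤ) : ZMod N) := by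
    push_cast
    simp only [natCast_zmod_val]
  rw [this, stdAddChar_coe, omegaK]
  push_cast
  ring_nf

lemma isTwoCocycle_omegaK (k : ℤ) : IsTwoCocycle (omegaK N k) := by
  simp only [funext₂ (omegaK_eq_stdAddChar k)]
  exact isTwoCocycle_addChar_comp _ _ (fun _ _ _ => by simp only [Prod.fst_add]; ring)
    (fun _ _ _ => by simp only [Prod.snd_add]; ring)

end StdAddChar

section Pullback

variable {N M : ℕ} [NeZero N] [NeZero M]

lemma omegaK_iotaPair_of_modEq {k k' : ℤ} (h : k' * M ≡ k [ZMOD N]) (x y : ZMod N × ZMod N) :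
    omegaK (N * M) k' (iotaPair N M x) (iotaPair N M y) = omegaK N k x y := by
  have hk : (k' : ZMod N) * M = k := by exact_mod_cast (ZMod.intCast_eq_intCast_iff _ _ _).2 h
  simp only [omegaK_eq_stdAddChar, iotaPair]
  have : (k' : ZMod (N * M)) * ((M * x.1.val : ℕ) : ZMod (N * M)) *
      ((M * y.2.val : ℕ) : ZMod (N * M)) =
      (M : ZMod (N * M)) * ((k' * M * x.1.val * y.2.val : ℤ) : ZMod (N * M)) := by
    push_cast
    ring
  rw [this, stdAddChar_natCast_mul_intCast]
  push_cast
  rw [hk, natCast_zmod_val, natCast_zmod_val]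

lemma exists_modEq_of_isTwoCocycle_of_pullback {k : ℤ}
    {ω : ZMod (N * M) × ZMod (N * M) → ZMod (N * M) × ZMod (N * M) → ℂ} (hω : IsTwoCocycle ω)
    (hpull : ∀ x y, ω (iotaPair N M x) (iotaPair N M y) = omegaK N k x y) :
    ∃ k' : ℤ, k' * M ≡ k [ZMOD N] := by
  set e₁ : ZMod (N * M) × ZMod (N * M) := (1, 0)
  set e₂ : ZMod (N * M) × ZMod (N * M) := (0, 1)
  -- `v = 1` unless `N = 1`, where `v = 0`; only `(v : ZMod N) = 1` matters.
  set v := (1 : ZMod N).val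
  have hι₁ : iotaPair N M (1, 0) = (M * v) • e₁ := by ext <;> simp [iotaPair, e₁, v]
  have hι₂ : iotaPair N M (0, 1) = (M * v) • e₂ := by ext <;> simp [iotaPair, e₂, v]
  have htors : skewPairing ω e₁ e₂ ^ (N * M) = 1 := by
    rw [← hω.skewPairing_nsmul_left, show (N * M) • e₁ = 0 by ext <;> simp [e₁],
      hω.skewPairing_zero_left]
  obtain ⟨t, ht⟩ := exists_stdAddChar_eq_of_pow_eq_one htors
  have hleft :
      skewPairing ω (iotaPair N M (1, 0)) (iotaPair N M (0, 1)) = stdAddChar (k : ZMod N) := by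
    simp [skewPairing, hpull, omegaK_eq_stdAddChar]
  have hright : skewPairing ω (iotaPair N M (1, 0)) (iotaPair N M (0, 1)) =
      stdAddChar ((t.val * M * v * v : ℤ) : ZMod N) := by
    rw [hι₁, hι₂, hω.skewPairing_nsmul_nsmul, ← ht, ← AddChar.map_nsmul_eq_pow,
      ← stdAddChar_natCast_mul_intCast (M := M)]
    congr 1
    rw [nsmul_eq_mul]
    push_cast
    rw [natCast_zmod_val]
    ring
  refine ⟨t.val, (ZMod.intCast_eq_intCast_iff _ _ _).1 ?_⟩
  have := injective_stdAddChar (hright.symm.trans hleft)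
  push_cast at this ⊢
  simpa [v, natCast_zmod_val] using this

end Pullback

theorem exists_cocycle_pullback_iff_general (N M : ℕ) [NeZero N] [NeZero M] (k : ℕ) :
    (∃ ωhat : ZMod (N * M) × ZMod (N * M) → ZMod (N * M) × ZMod (N * M) → ℂ,
      (∀ x y z : ZMod (N * M) × ZMod (N * M),
        ωhat y z * (ωhat (x + y) z)⁻¹ * ωhat x (y + z) * (ωhat x y)⁻¹ = 1) ∧
      (∀ x y : ZMod N × ZMod N,
        ωhat (iotaPair N M x) (iotaPair N M y) = omegaK N (k : ℤ) x y)) ↔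
    ∃ k' : ℤ, k' * (M : ℤ) ≡ (k : ℤ) [ZMOD (N : ℤ)] := by
  constructor
  · rintro ⟨ω, hω, hpull⟩
    exact exists_modEq_of_isTwoCocycle_of_pullback hω hpull
  · rintro ⟨k', hk'⟩
    exact ⟨omegaK (N * M) k', isTwoCocycle_omegaK k', omegaK_iotaPair_of_modEq hk'⟩

/-- For `k ∈ {0, …, N−1}`, there exists a 2-cocycle `ω̂` on `ℤ/(NM) × ℤ/(NM)` with values in
nonzero complex numbers whose pullback along `ι` equals `ω_k^{(N)}` if and only if there is an
integer `k'` with `k'M ≡ k (mod N)`. -/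
theorem exists_cocycle_pullback_iff (N M : ℕ) [NeZero N] [NeZero M] (k : ℕ) (hk : k < N) :
    (∃ ωhat : ZMod (N * M) × ZMod (N * M) → ZMod (N * M) × ZMod (N * M) → ℂ,
      (∀ x y z : ZMod (N * M) × ZMod (N * M),
        ωhat y z * (ωhat (x + y) z)⁻¹ * ωhat x (y + z) * (ωhat x y)⁻¹ = 1) ∧
      (∀ x y : ZMod N × ZMod N,
        ωhat (iotaPair N M x) (iotaPair N M y) = omegaK N (k : ℤ) x y)) ↔
    ∃ k' : ℤ, k' * (M : ℤ) ≡ (k : ℤ) [ZMOD (N : ℤ)] :=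
  exists_cocycle_pullback_iff_general N M k
end

section
/- Let λ: Ĝ → G be a surjective homomorphism of groups, let A be an abelian group (written additively, with trivial group actions), and let n ≥ 1. Then pullback along λ, sending θ: Gⁿ → A to λ*θ := θ ∘ (λ × ⋯ × λ): Ĝⁿ → A, is a bijection from the set of n-cocycles θ on G satisfying θ(g₁, …, g_n) = 0 whenever g_i = 1 for some i, onto the set of n-cocycles c on Ĝ satisfying c(ĝ₁, …, ĝ_n) = 0 whenever ĝ_i ∈ ker λ for some i. -/
/-- The differential of (inhomogeneous) group cochains with values in an abelian group with
trivial action: `(δc)(h₁, …, h_{n+1}) = c(h₂, …, h_{n+1})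
+ ∑_{i=1}^{n} (−1)ⁱ c(h₁, …, h_i h_{i+1}, …, h_{n+1}) + (−1)^{n+1} c(h₁, …, h_n)`. -/
def cochainD {H : Type*} [Group H] {A : Type*} [AddCommGroup A] (n : ℕ)
    (c : (Fin n → H) → A) : (Fin (n + 1) → H) → A :=
  fun h =>
    c (fun i => h i.succ)
      + ∑ j : Fin n, ((-1 : ℤ) ^ (j.val + 1)) • c (Fin.contractNth j.castSucc (· * ·) h)
      + ((-1 : ℤ) ^ (n + 1)) • c (fun i => h i.castSucc)

/-!
Let `K = ker λ`. Evaluating `δc = 0` at the tuple obtained from `h` by inserting `z ∈ K` right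
after slot `j` kills every term in which `z` survives as an entry. What remains says that
multiplying slot `j` by `z` on the right has the same effect on `c` as multiplying slot `j + 1`
by `z` on the left, and no effect when `j` is the last slot. Since `z * g = g * (g⁻¹ * z * g)` with
`g⁻¹ * z * g ∈ K`, descending induction on `j` makes `c` invariant under `K` in every slot, so
`c` factors through `λⁿ`; surjectivity of `λ` makes the factor a normalized cocycle.
-/

namespace Fin

variable {α : Type*} {n : ℕ}

theorem succAbove_castSucc_eq_succAbove_succ {j k : Fin n} (hkj : k ≠ j) :
    j.castSucc.succAbove k = j.succ.succAbove k := by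
  rcases hkj.lt_or_gt with hk | hk
  · rw [succAbove_castSucc_of_lt _ _ hk, succAbove_succ_of_le _ _ hk.le]
  · rw [succAbove_castSucc_of_le _ _ hk.le, succAbove_succ_of_lt _ _ hk]

theorem contractNth_castSucc_insertNth_succ (op : α → α → α) (j : Fin n) (x : α)
    (g : Fin n → α) :
    contractNth j.castSucc op (insertNth j.succ x g) = Function.update g j (op (g j) x) := by
  ext k
  rcases eq_or_ne k j with rfl | hkj
  · rw [contractNth_apply_of_eq _ _ _ _ rfl, Function.update_self, ← succAbove_succ_self,
      insertNth_apply_succAbove, insertNth_apply_same]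
  · rw [contractNth_apply_of_ne _ _ _ _ (by simpa [eq_comm, Fin.val_inj] using hkj),
      succAbove_castSucc_eq_succAbove_succ hkj, insertNth_apply_succAbove,
      Function.update_of_ne hkj]

theorem contractNth_castSucc_insertNth_castSucc (op : α → α → α) (j : Fin n) (x : α)
    (g : Fin n → α) :
    contractNth j.castSucc op (insertNth j.castSucc x g) = Function.update g j (op x (g j)) := by
  ext k
  rcases eq_or_ne k j with rfl | hkj
  · rw [contractNth_apply_of_eq _ _ _ _ rfl, Function.update_self, ← succAbove_castSucc_self,
      insertNth_apply_succAbove, insertNth_apply_same]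
  · rw [contractNth_apply_of_ne _ _ _ _ (by simpa [eq_comm, Fin.val_inj] using hkj),
      insertNth_apply_succAbove, Function.update_of_ne hkj]

theorem exists_contractNth_apply_eq (op : α → α → α) (g : Fin (n + 1) → α) {p : Fin (n + 1)}
    {j : Fin n} (hp : p ≠ j.castSucc) (hp' : p ≠ j.succ) :
    ∃ k, contractNth j.castSucc op g k = g p := by
  obtain ⟨k, rfl⟩ := exists_succAbove_eq hp
  have hkj : k ≠ j := by rintro rfl; exact hp' (succAbove_castSucc_self k)
  exact ⟨k, contractNth_apply_of_ne _ _ _ _ (by simpa [eq_comm, Fin.val_inj] using hkj)⟩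

end Fin

theorem neg_one_pow_smul_add_neg_one_pow_succ_smul_eq_zero {A : Type*} [AddCommGroup A]
    (k : ℕ) {x y : A} : (-1 : ℤ) ^ k • x + (-1 : ℤ) ^ (k + 1) • y = 0 ↔ x = y := by
  rw [pow_succ, mul_neg_one, neg_smul, ← sub_eq_add_neg, ← smul_sub,
    ((isUnit_neg_one (α := ℤ)).pow k).smul_eq_zero, sub_eq_zero]

section CocycleVanishingOnSubgroup

open Function

variable {H : Type*} [Group H] {A : Type*} [AddCommGroup A] (K : Subgroup H) {n : ℕ}

theorem cochain_contractNth_insertNth_eq_zero {c : (Fin n → H) → A}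
    (hK : ∀ h : Fin n → H, (∃ i, h i ∈ K) → c h = 0) {p : Fin (n + 1)} {z : H} (hz : z ∈ K)
    (h : Fin n → H) {j : Fin n} (hp : p ≠ j.castSucc) (hp' : p ≠ j.succ) :
    c (Fin.contractNth j.castSucc (· * ·) (Fin.insertNth p z h)) = 0 := by
  obtain ⟨k, hk⟩ := Fin.exists_contractNth_apply_eq (· * ·) (Fin.insertNth p z h) hp hp'
  exact hK _ ⟨k, by rwa [hk, Fin.insertNth_apply_same]⟩

theorem cocycle_update_last_mul_of_mem {c : (Fin (n + 1) → H) → A}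
    (hc : cochainD (n + 1) c = 0) (hK : ∀ h : Fin (n + 1) → H, (∃ i, h i ∈ K) → c h = 0)
    {z : H} (hz : z ∈ K) (h : Fin (n + 1) → H) :
    c (update h (Fin.last n) (h (Fin.last n) * z)) = c h := by
  set t : Fin (n + 2) → H := Fin.insertNth (Fin.last n).succ z h with ht
  have hfirst : c (fun i => t i.succ) = 0 := hK _ ⟨Fin.last n, by simpa [t] using hz⟩
  have hlast : (fun i => t i.castSucc) = h := by
    ext i
    rw [ht, Fin.succ_last, ← Fin.succAbove_last, Fin.insertNth_apply_succAbove]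
  have hsum : ∑ j : Fin (n + 1), (-1 : ℤ) ^ (j.val + 1) • c (Fin.contractNth j.castSucc (· * ·) t)
      = (-1 : ℤ) ^ (n + 1) • c (update h (Fin.last n) (h (Fin.last n) * z)) := by
    rw [Finset.sum_eq_single (Fin.last n) ?_ (by simp), ht, Fin.contractNth_castSucc_insertNth_succ,
      Fin.val_last]
    intro j _ hj
    rw [cochain_contractNth_insertNth_eq_zero K hK hz h, smul_zero]
    · rw [Fin.succ_last]; exact (Fin.castSucc_lt_last j).ne'
    · exact (Fin.succ_injective _).ne (Ne.symm hj)
  have := congrFun hc t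
  rwa [cochainD, hfirst, zero_add, hsum, hlast, Pi.zero_apply,
    neg_one_pow_smul_add_neg_one_pow_succ_smul_eq_zero] at this

theorem cocycle_update_castSucc_mul_of_mem {c : (Fin (n + 1) → H) → A}
    (hc : cochainD (n + 1) c = 0) (hK : ∀ h : Fin (n + 1) → H, (∃ i, h i ∈ K) → c h = 0)
    {z : H} (hz : z ∈ K) (h : Fin (n + 1) → H) (i : Fin n) :
    c (update h i.castSucc (h i.castSucc * z)) = c (update h i.succ (z * h i.succ)) := by
  set t : Fin (n + 2) → H := Fin.insertNth i.castSucc.succ z h with ht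
  have hfirst : c (fun k => t k.succ) = 0 := hK _ ⟨i.castSucc, by simpa [t] using hz⟩
  have hlast : c (fun k => t k.castSucc) = 0 :=
    hK _ ⟨i.succ, by simpa [t, ← Fin.succ_castSucc] using hz⟩
  have hsum : ∑ j : Fin (n + 1), (-1 : ℤ) ^ (j.val + 1) • c (Fin.contractNth j.castSucc (· * ·) t)
      = (-1 : ℤ) ^ (i.val + 1) • c (update h i.castSucc (h i.castSucc * z))
        + (-1 : ℤ) ^ (i.val + 1 + 1) • c (update h i.succ (z * h i.succ)) := by
    rw [Finset.sum_eq_add_of_mem i.castSucc i.succ (Finset.mem_univ _) (Finset.mem_univ _)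
      Fin.castSucc_lt_succ.ne ?_, ht, Fin.contractNth_castSucc_insertNth_succ, Fin.succ_castSucc,
      Fin.contractNth_castSucc_insertNth_castSucc, Fin.val_castSucc, Fin.val_succ]
    rintro j - ⟨hj, hj'⟩
    rw [cochain_contractNth_insertNth_eq_zero K hK hz h, smul_zero]
    · rw [Fin.succ_castSucc]; exact (Fin.castSucc_injective _).ne (Ne.symm hj')
    · exact (Fin.succ_injective _).ne (Ne.symm hj)
  have := congrFun hc t
  rwa [cochainD, hfirst, zero_add, hsum, hlast, smul_zero, add_zero, Pi.zero_apply,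
    neg_one_pow_smul_add_neg_one_pow_succ_smul_eq_zero] at this

theorem cocycle_update_mul_of_mem [K.Normal] {c : (Fin (n + 1) → H) → A}
    (hc : cochainD (n + 1) c = 0) (hK : ∀ h : Fin (n + 1) → H, (∃ i, h i ∈ K) → c h = 0)
    (i : Fin (n + 1)) : ∀ z ∈ K, ∀ h : Fin (n + 1) → H, c (update h i (h i * z)) = c h := by
  induction i using Fin.reverseInduction with
  | last => exact fun z hz h => cocycle_update_last_mul_of_mem K hc hK hz h
  | cast i ih =>
    intro z hz h
    rw [cocycle_update_castSucc_mul_of_mem K hc hK hz h i,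
      show z * h i.succ = h i.succ * ((h i.succ)⁻¹ * z * h i.succ) by group]
    exact ih _ (‹K.Normal›.conj_mem' z hz _) h

theorem cocycle_apply_eq_of_inv_mul_mem [K.Normal] {c : (Fin n → H) → A}
    (hc : cochainD n c = 0) (hK : ∀ h : Fin n → H, (∃ i, h i ∈ K) → c h = 0)
    {h h' : Fin n → H} (hcoset : ∀ i, (h i)⁻¹ * h' i ∈ K) : c h = c h' := by
  cases n with
  | zero => exact congrArg c (Subsingleton.elim h h')
  | succ n =>
    suffices ∀ s : Finset (Fin (n + 1)), c (s.piecewise h' h) = c h by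
      simpa using (this Finset.univ).symm
    intro s
    induction s using Finset.induction_on with
    | empty => simp
    | insert a s ha ih =>
      rw [Finset.piecewise_insert, ← ih,
        show h' a = s.piecewise h' h a * ((h a)⁻¹ * h' a) by
          rw [Finset.piecewise_eq_of_notMem _ _ _ ha]; group]
      exact cocycle_update_mul_of_mem K hc hK a _ (hcoset a) _

end CocycleVanishingOnSubgroup

theorem cochainD_comp_piMap {H G A : Type*} [Group H] [Group G] [AddCommGroup A] {n : ℕ}
    (f : H →* G) (θ : (Fin n → G) → A) :
    cochainD n (fun h : Fin n → H => θ fun i => f (h i)) =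
      fun h : Fin (n + 1) → H => cochainD n θ fun i => f (h i) := by
  ext h
  simp only [cochainD]
  congr
  ext j
  congr 2
  exact Fin.comp_contractNth _ _ (map_mul f) _ _

theorem pullback_bijOn_normalized_cocycles_general {Ghat G : Type*} [Group Ghat] [Group G]
    (lam : Ghat →* G) (hlam : Function.Surjective lam)
    (A : Type*) [AddCommGroup A] (n : ℕ) :
    Set.BijOn (fun (θ : (Fin n → G) → A) => fun h : Fin n → Ghat => θ (fun i => lam (h i)))
      {θ : (Fin n → G) → A |
        cochainD n θ = 0 ∧ ∀ h : Fin n → G, (∃ i, h i = 1) → θ h = 0}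
      {c : (Fin n → Ghat) → A |
        cochainD n c = 0 ∧ ∀ h : Fin n → Ghat, (∃ i, h i ∈ lam.ker) → c h = 0} := by
  have hlamPi (m : ℕ) : Function.Surjective fun (h : Fin m → Ghat) i => lam (h i) :=
    Function.Surjective.piMap fun _ => hlam
  refine ⟨?_, (hlamPi n).injective_comp_right.injOn, ?_⟩
  · rintro θ ⟨hθ, hθ1⟩
    refine ⟨by rw [cochainD_comp_piMap, hθ]; rfl, fun h ⟨i, hi⟩ => hθ1 _ ⟨i, hi⟩⟩
  · rintro c ⟨hc, hcK⟩
    have hfac : Function.FactorsThrough c fun (h : Fin n → Ghat) i => lam (h i) :=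
      fun h h' hcoset => cocycle_apply_eq_of_inv_mul_mem lam.ker hc hcK fun i => by
        rw [MonoidHom.mem_ker, map_mul, map_inv, show lam (h i) = lam (h' i) from congrFun hcoset i,
          inv_mul_cancel]
    set θ : (Fin n → G) → A := Function.extend (fun (h : Fin n → Ghat) i => lam (h i)) c 0
    have hpull : (fun h : Fin n → Ghat => θ fun i => lam (h i)) = c :=
      funext (hfac.extend_apply 0)
    refine ⟨θ, ⟨?_, ?_⟩, hpull⟩
    · ext g
      obtain ⟨h, rfl⟩ := hlamPi (n + 1) g
      simpa [hpull, hc] using (congrFun (cochainD_comp_piMap lam θ) h).symm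
    · rintro g ⟨i, hi⟩
      obtain ⟨h, rfl⟩ := hlamPi n g
      exact (congrFun hpull h).trans (hcK h ⟨i, hi⟩)

/-- Pullback along a surjective group homomorphism `λ : Ĝ → G` is a bijection from the
normalized `n`-cocycles on `G` (those vanishing whenever some entry is `1`) onto the
`n`-cocycles on `Ĝ` vanishing whenever some entry lies in `ker λ`. -/
theorem pullback_bijOn_normalized_cocycles {Ghat G : Type*} [Group Ghat] [Group G]
    (lam : Ghat →* G) (hlam : Function.Surjective lam)
    (A : Type*) [AddCommGroup A] (n : ℕ) (hn : 1 ≤ n) :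
    Set.BijOn (fun (θ : (Fin n → G) → A) => fun h : Fin n → Ghat => θ (fun i => lam (h i)))
      {θ : (Fin n → G) → A |
        cochainD n θ = 0 ∧ ∀ h : Fin n → G, (∃ i, h i = 1) → θ h = 0}
      {c : (Fin n → Ghat) → A |
        cochainD n c = 0 ∧ ∀ h : Fin n → Ghat, (∃ i, h i ∈ lam.ker) → c h = 0} :=
  pullback_bijOn_normalized_cocycles_general lam hlam A n
end
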